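/- arXiv:2602.18409 — 3 statements merged into one kernel-verified Lean document; each statement's English description precedes it below -/
import Mathlib

section
/- Let l ∈ ℕ, let 𝒯 be a finite set of templates, and let (G,v) and (G',v') be finite pointed labelled graphs. Then (G',v') ⊨ χ^l_{(G,v)} if and only if (G',v') is graded l-𝒯-bisimilar to (G,v). -/
set_option maxHeartbeats 1000000

attribute [local instance 10] Classical.propDecidable

/-- A template `T = (V, E⁺, E⁻, r)`: vertex set `Fin (n+1)` (cardinality `n+1`),
root `0`, edges `pos`, non-edges `neg`, with `pos ∩ neg = ∅`. -/
structure Template where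
  n : ℕ
  pos : Finset (Fin (n + 1) × Fin (n + 1))
  neg : Finset (Fin (n + 1) × Fin (n + 1))
  disj : ∀ p, ¬(p ∈ pos ∧ p ∈ neg)

/-- A labelled directed graph with labels in `Λ`: a finite vertex set (a finite
subset of `ℕ`), an edge relation `E ⊆ V × V`, and a labelling of the nodes. -/
structure LGraph (Λ : Type) where
  verts : Finset ℕ
  edge : ℕ → ℕ → Prop
  lab : ℕ → Λ
  edge_mem : ∀ u w, edge u w → u ∈ verts ∧ w ∈ verts

/-- `f` is a template embedding of `T` into the pointed graph `(G, w)`: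
an injective map sending the root to `w`, `E⁺`-pairs to edges and `E⁻`-pairs to
non-edges. -/
def IsEmb {Λ : Type} (T : Template) (G : LGraph Λ) (w : ℕ) (f : Fin (T.n + 1) → ℕ) : Prop :=
  Function.Injective f ∧ f 0 = w ∧ (∀ i, f i ∈ G.verts) ∧
    (∀ p ∈ T.pos, G.edge (f p.1) (f p.2)) ∧ (∀ p ∈ T.neg, ¬ G.edge (f p.1) (f p.2))

/-- The (finite) set `emb(T,(G,w))` of template embeddings of `T` into `(G, w)`. -/
noncomputable def embFinset {Λ : Type} (T : Template) (G : LGraph Λ) (w : ℕ) :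
    Finset (Fin (T.n + 1) → ℕ) :=
  (Fintype.piFinset fun _ : Fin (T.n + 1) => G.verts).filter (IsEmb T G w)

/-- Forth condition: any `k` pairwise distinct template embeddings of `T` at `(G,v)`
can be matched by `k` pairwise distinct embeddings at `(G',v')`, pointwise related
by `Z`. -/
def Forth {Λ : Type} (Z : ℕ → ℕ → Prop) (T : Template) (G G' : LGraph Λ)
    (v v' : ℕ) (k : ℕ) : Prop :=
  ∀ F : Fin k → (Fin (T.n + 1) → ℕ), Function.Injective F → (∀ i, IsEmb T G v (F i)) →
    ∃ F' : Fin k → (Fin (T.n + 1) → ℕ), Function.Injective F' ∧ (∀ i, IsEmb T G' v' (F' i)) ∧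
      ∀ i u, Z (F i u) (F' i u)

/-- `Z` is a graded `l`-`𝒯`-bisimulation between `G` and `G'`, where the allowed
multiplicities `k` in the back-and-forth conditions are those satisfying `P`. -/
def IsBisimP {Λ : Type} (𝒯 : Finset Template) (P : ℕ → Prop) (G G' : LGraph Λ) :
    ℕ → (ℕ → ℕ → Prop) → Prop
  | 0, Z => ∀ v v', Z v v' → G.lab v = G'.lab v'
  | l + 1, Z => ∃ Z', IsBisimP 𝒯 P G G' l Z' ∧
      ∀ v v', Z v v' → Z' v v' ∧ ∀ T ∈ 𝒯, ∀ k, P k →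
        Forth Z' T G G' v v' k ∧ Forth (fun a b => Z' b a) T G' G v' v k

/-- `(G,v)` and `(G',v')` are graded `l`-`𝒯`-bisimilar. -/
def GBisimilar {Λ : Type} (𝒯 : Finset Template) (l : ℕ) (G : LGraph Λ) (v : ℕ)
    (G' : LGraph Λ) (v' : ℕ) : Prop :=
  ∃ Z, IsBisimP 𝒯 (fun k => 1 ≤ k) G G' l Z ∧ Z v v'

/-- `(G,v)` and `(G',v')` are `l`-`c`-`𝒯`-bisimilar (multiplicities restricted to `k ≤ c`). -/
def BBisimilar {Λ : Type} (𝒯 : Finset Template) (l c : ℕ) (G : LGraph Λ) (v : ℕ)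
    (G' : LGraph Λ) (v' : ℕ) : Prop :=
  ∃ Z, IsBisimP 𝒯 (fun k => 1 ≤ k ∧ k ≤ c) G G' l Z ∧ Z v v'

/-- `A↾c`: cap all multiplicities of a multiset at `c`. -/
noncomputable def mcap {α : Type} (c : ℕ) (m : Multiset α) : Multiset α :=
  m.toFinset.val.bind fun a => Multiset.replicate (min c (m.count a)) a

/-- The `𝒯`-WL colouring of `G` after `l` rounds, using `hash0` for the initial
colouring and `hash` for the refinement rounds; at each round the new colour of `v`
hashes its previous colour together with, for each template `T ∈ 𝒯`, the multiset of
`T`-labelled colourings induced by the template embeddings at `v`. -/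
noncomputable def colWL {Λ C : Type} (𝒯 : Finset Template) (hash0 : Λ → C)
    (hash : C → ((T : {x // x ∈ 𝒯}) → Multiset (Fin (T.1.n + 1) → C)) → C)
    (G : LGraph Λ) : ℕ → ℕ → C
  | 0, v => hash0 (G.lab v)
  | l + 1, v =>
      hash (colWL 𝒯 hash0 hash G l v)
        (fun T => (embFinset T.1 G v).val.map
          (fun f => fun u => colWL 𝒯 hash0 hash G l (f u)))

/-- A multiset function is `c`-bounded if its value is unchanged when all
multiplicities larger than `c` are replaced by `c`. -/
def CBoundedFun {α β : Type} (c : ℕ) (g : Multiset α → β) : Prop :=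
  ∀ m, g m = g (mcap c m)

/-- An `nAr`-ary `L`-layer `𝒯`-GNN with feature dimension `d`: templates from `𝒯`,
template-aggregation functions (invariant under root-fixing label-preserving template
automorphisms), outer multiset aggregation functions, combination functions, and a
Boolean classification function. -/
structure TGNN (𝒯 : Finset Template) (d nAr L : ℕ) where
  temp : Fin L → Fin nAr → Template
  temp_mem : ∀ l j, temp l j ∈ 𝒯
  aggT : (l : Fin L) → (j : Fin nAr) → ((Fin ((temp l j).n + 1) → (Fin d → ℝ)) → (Fin d → ℝ))
  aggT_inv : ∀ (l : Fin L) (j : Fin nAr) (σ : Equiv.Perm (Fin ((temp l j).n + 1)))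
      (lab₁ lab₂ : Fin ((temp l j).n + 1) → (Fin d → ℝ)),
      σ 0 = 0 →
      (∀ p : Fin ((temp l j).n + 1) × Fin ((temp l j).n + 1),
        p ∈ (temp l j).pos ↔ (σ p.1, σ p.2) ∈ (temp l j).pos) →
      (∀ p : Fin ((temp l j).n + 1) × Fin ((temp l j).n + 1),
        p ∈ (temp l j).neg ↔ (σ p.1, σ p.2) ∈ (temp l j).neg) →
      (∀ u, u ≠ 0 → lab₁ u = lab₂ (σ u)) →
      aggT l j lab₁ = aggT l j lab₂
  agg : Fin L → Fin nAr → Multiset (Fin d → ℝ) → (Fin d → ℝ)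
  comb : Fin L → (Fin d → ℝ) → (Fin nAr → (Fin d → ℝ)) → (Fin d → ℝ)
  cls : (Fin d → ℝ) → Bool

/-- The feature vector `λ^l(v)` of node `v` after `l` layers of the `𝒯`-GNN `N` on
input graph `G`. -/
noncomputable def TGNN.feat {𝒯 : Finset Template} {d nAr L : ℕ} (N : TGNN 𝒯 d nAr L)
    (G : LGraph (Fin d → ℝ)) : ℕ → ℕ → (Fin d → ℝ)
  | 0, v => G.lab v
  | l + 1, v =>
      if h : l < L then
        N.comb ⟨l, h⟩ (N.feat G l v)
          (fun j => N.agg ⟨l, h⟩ j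
            ((embFinset (N.temp ⟨l, h⟩ j) G v).val.map
              (fun f => N.aggT ⟨l, h⟩ j (fun u => N.feat G l (f u)))))
      else fun _ => 0

/-- A `𝒯`-GNN is `c`-bounded if all its outer aggregation functions are `c`-bounded. -/
def TGNN.IsCBounded {𝒯 : Finset Template} {d nAr L : ℕ} (N : TGNN 𝒯 d nAr L) (c : ℕ) : Prop :=
  ∀ l j, CBoundedFun c (N.agg l j)

def boolToReal (b : Bool) : ℝ := if b then 1 else 0

/-- Identify a `{0,1}^d`-labelled graph with a real-vector labelled graph. -/
def LGraph.toReal {d : ℕ} (G : LGraph (Fin d → Bool)) : LGraph (Fin d → ℝ) :=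
  ⟨G.verts, G.edge, fun v i => boolToReal (G.lab v i), G.edge_mem⟩

/-- Initialize real feature vectors of dimension `d'` from `{0,1}^a`-labels
(the first `a` coordinates hold the truth values of the propositions, the rest are `0`). -/
def initG {a : ℕ} (d' : ℕ) (G : LGraph (Fin a → Bool)) : LGraph (Fin d' → ℝ) :=
  ⟨G.verts, G.edge, fun v i => if h : (i : ℕ) < a then boolToReal (G.lab v ⟨i, h⟩) else 0,
    G.edge_mem⟩

/-- Formulae of graded template modal logic `GML(𝒯)` over propositions `AP`
(`⊤` included; a modality `⟨T⟩^{≥j}(φ₁,…,φ_{n_T})` takes `n_T = |V_T| - 1` arguments). -/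
inductive GML (AP : Type) : Type
  | top : GML AP
  | prop : AP → GML AP
  | neg : GML AP → GML AP
  | and : GML AP → GML AP → GML AP
  | dia : (T : Template) → ℕ → (Fin T.n → GML AP) → GML AP

/-- Semantics of `GML(𝒯)` on pointed labelled graphs:
`(G,v) ⊨ ⟨T⟩^{≥j}(φ⃗)` iff at least `j` embeddings `f ∈ emb(T,(G,v))` satisfy
`(G, f(i)) ⊨ φᵢ` for all `1 ≤ i ≤ n_T`. -/
def Sat {AP : Type} (G : LGraph (AP → Bool)) : GML AP → ℕ → Prop
  | .top, _ => True
  | .prop p, v => G.lab v p = true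
  | .neg φ, v => ¬ Sat G φ v
  | .and φ ψ, v => Sat G φ v ∧ Sat G ψ v
  | .dia T j φs, v =>
      j ≤ ((embFinset T G v).filter
        (fun f => ∀ i : Fin T.n, Sat G (φs i) (f i.succ))).card

/-- Modal depth. -/
def GML.md {AP : Type} : GML AP → ℕ
  | .top => 0
  | .prop _ => 0
  | .neg φ => φ.md
  | .and φ ψ => max φ.md ψ.md
  | .dia _ _ φs => 1 + Finset.univ.sup fun i => (φs i).md

/-- Counting bound: the least `c` such that every modality `⟨T⟩^{≥j}` occurring in the
formula has `j ≤ c`. -/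
def GML.cb {AP : Type} : GML AP → ℕ
  | .top => 0
  | .prop _ => 0
  | .neg φ => φ.cb
  | .and φ ψ => max φ.cb ψ.cb
  | .dia _ j φs => max j (Finset.univ.sup fun i => (φs i).cb)

/-- Syntactic depth: counts both Boolean connectives and modalities along the deepest
branch of the syntax tree. -/
def GML.sd {AP : Type} : GML AP → ℕ
  | .top => 0
  | .prop _ => 0
  | .neg φ => 1 + φ.sd
  | .and φ ψ => 1 + max φ.sd ψ.sd
  | .dia _ _ φs => 1 + Finset.univ.sup fun i => (φs i).sd

/-- Well-formedness of a `GML(𝒯)` formula: all templates come from `𝒯` and all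
grades satisfy `j ≥ 1`. -/
def GML.Wf {AP : Type} (𝒯 : Finset Template) : GML AP → Prop
  | .top => True
  | .prop _ => True
  | .neg φ => φ.Wf 𝒯
  | .and φ ψ => φ.Wf 𝒯 ∧ ψ.Wf 𝒯
  | .dia T j φs => T ∈ 𝒯 ∧ 1 ≤ j ∧ ∀ i, (φs i).Wf 𝒯

/-- Finite conjunction (`⊤` for the empty list). -/
def bigConj {AP : Type} : List (GML AP) → GML AP
  | [] => .top
  | φ :: rest => .and φ (bigConj rest)

/-- `|S^{(G,v)}_{T,φ⃗}|`: the number of embeddings `f ∈ emb(T,(G,v))` with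
`(G, f(i)) ⊨ φᵢ` for all `1 ≤ i ≤ n_T`. -/
noncomputable def Scard {AP : Type} (G : LGraph (AP → Bool)) (T : Template) (v : ℕ)
    (φs : Fin T.n → GML AP) : ℕ :=
  ((embFinset T G v).filter (fun f => ∀ i : Fin T.n, Sat G (φs i) (f i.succ))).card

/-- The `l`-characteristic formula `χ^l_{(G,v)}`. -/
noncomputable def charU {AP : Type} [Fintype AP] (𝒯 : Finset Template) :
    ℕ → LGraph (AP → Bool) → ℕ → GML AP
  | 0 => fun G v =>
      bigConj ((Finset.univ : Finset AP).toList.map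
        (fun p => if G.lab v p then GML.prop p else GML.neg (GML.prop p)))
  | l + 1 => fun G v =>
      GML.and (charU 𝒯 l G v)
        (bigConj (𝒯.toList.map (fun T =>
          GML.and
            (bigConj ((embFinset T G v).toList.map (fun f =>
              GML.dia T (Scard G T v (fun i => charU 𝒯 l G (f i.succ)))
                (fun i => charU 𝒯 l G (f i.succ)))))
            (GML.neg (GML.dia T (Scard G T v (fun _ => GML.top) + 1)
              (fun _ => GML.top))))))

/-- `reps m` is a system of representatives for the `m`-`c`-`𝒯`-bisimilarity classes of
finite pointed labelled graphs: every representative is a genuine pointed graph, every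
pointed graph is `m`-`c`-`𝒯`-bisimilar to some representative, and distinct
representatives are non-bisimilar. -/
def RepSystem {AP : Type} (𝒯 : Finset Template) (c : ℕ)
    (reps : ℕ → Finset (LGraph (AP → Bool) × ℕ)) : Prop :=
  ∀ m : ℕ,
    (∀ q ∈ reps m, q.2 ∈ q.1.verts) ∧
    (∀ (G : LGraph (AP → Bool)) (v : ℕ), v ∈ G.verts →
      ∃ q ∈ reps m, BBisimilar 𝒯 m c q.1 q.2 G v) ∧
    (∀ q ∈ reps m, ∀ q' ∈ reps m, BBisimilar 𝒯 m c q.1 q.2 q'.1 q'.2 → q = q')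

/-- The bounded `l`-`c`-characteristic formula `χ^{l,c}_{(G,v)}`, relative to a chosen
system `reps` of representatives of the bounded bisimilarity classes. -/
noncomputable def charB {AP : Type} [Fintype AP] (𝒯 : Finset Template) (c : ℕ)
    (reps : ℕ → Finset (LGraph (AP → Bool) × ℕ)) :
    ℕ → LGraph (AP → Bool) → ℕ → GML AP
  | 0 => fun G v =>
      bigConj ((Finset.univ : Finset AP).toList.map
        (fun p => if G.lab v p then GML.prop p else GML.neg (GML.prop p)))
  | l + 1 => fun G v =>
      GML.and (charB 𝒯 c reps l G v)
        (bigConj (𝒯.toList.map (fun T =>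
          GML.and
            (bigConj ((embFinset T G v).toList.map (fun f =>
              GML.dia T (min c (Scard G T v (fun i => charB 𝒯 c reps l G (f i.succ))))
                (fun i => charB 𝒯 c reps l G (f i.succ)))))
            (bigConj (((Fintype.piFinset (fun _ : Fin T.n => reps l)).filter
                (fun t => Scard G T v
                  (fun i => charB 𝒯 c reps l (t i).1 (t i).2) + 1 ≤ c)).toList.map
              (fun t => GML.neg (GML.dia T
                  (Scard G T v (fun i => charB 𝒯 c reps l (t i).1 (t i).2) + 1)
                  (fun i => charB 𝒯 c reps l (t i).1 (t i).2))))))))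

/-- Standard graded forth condition on out-neighbours. -/
def StdForth {Λ : Type} (Z : ℕ → ℕ → Prop) (G G' : LGraph Λ) (v v' : ℕ) (k : ℕ) : Prop :=
  ∀ us : Fin k → ℕ, Function.Injective us → (∀ i, G.edge v (us i)) →
    ∃ us' : Fin k → ℕ, Function.Injective us' ∧ (∀ i, G'.edge v' (us' i)) ∧
      ∀ i, Z (us i) (us' i)

/-- `Z` is a standard graded `l`-bisimulation (the relation underlying standard 1-WL
colour refinement). -/
def IsStdBisim {Λ : Type} (G G' : LGraph Λ) : ℕ → (ℕ → ℕ → Prop) → Prop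
  | 0, Z => ∀ v v', Z v v' → G.lab v = G'.lab v'
  | l + 1, Z => ∃ Z', IsStdBisim G G' l Z' ∧
      ∀ v v', Z v v' → Z' v v' ∧ ∀ k, 1 ≤ k →
        StdForth Z' G G' v v' k ∧ StdForth (fun a b => Z' b a) G' G v' v k

/-- `(G,v)` and `(G',v')` are standard graded `l`-bisimilar. -/
def StdBisimilar {Λ : Type} (l : ℕ) (G : LGraph Λ) (v : ℕ) (G' : LGraph Λ) (v' : ℕ) : Prop :=
  ∃ Z, IsStdBisim G G' l Z ∧ Z v v'

/-- The edge template `T₁ = ({r,a}, E⁺ = {(r,a)}, E⁻ = ∅, r)`. -/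
def T1 : Template := ⟨1, {(0, 1)}, ∅, by decide⟩

/-- The triangle template `T△ = ({r,a,b}, E⁺ = {(r,a),(a,b),(b,r)}, E⁻ = ∅, r)`. -/
def Ttri : Template := ⟨2, {(0, 1), (1, 2), (2, 0)}, ∅, by decide⟩

/-- The directed 3-cycle, all nodes with the same constant label. -/
def G3 : LGraph Unit where
  verts := {0, 1, 2}
  edge u w := (u = 0 ∧ w = 1) ∨ (u = 1 ∧ w = 2) ∨ (u = 2 ∧ w = 0)
  lab _ := ()
  edge_mem := by rintro u w (⟨rfl, rfl⟩ | ⟨rfl, rfl⟩ | ⟨rfl, rfl⟩) <;> simp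

/-- The directed 6-cycle, all nodes with the same constant label. -/
def G6 : LGraph Unit where
  verts := Finset.range 6
  edge u w := u < 6 ∧ w = (u + 1) % 6
  lab _ := ()
  edge_mem := by
    rintro u w ⟨hu, rfl⟩
    simp only [Finset.mem_range]
    omega
section AuxProofs

variable {Λ : Type} {AP : Type} [Fintype AP]

lemma aux_mem_embFinset {T : Template} {G : LGraph Λ} {w : ℕ} {f : Fin (T.n+1) → ℕ} :
    f ∈ embFinset T G w ↔ IsEmb T G w f := by
  simp only [embFinset, Finset.mem_filter, Fintype.mem_piFinset]
  exact ⟨fun h => h.2, fun h => ⟨h.2.2.1, h⟩⟩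

lemma aux_forth_mono {Z₁ Z₂ : ℕ → ℕ → Prop} (h : ∀ a b, Z₁ a b → Z₂ a b)
    {T : Template} {G G' : LGraph Λ} {v v' k : ℕ} :
    Forth Z₁ T G G' v v' k → Forth Z₂ T G G' v v' k := by
  intro hf F hFinj hFe
  obtain ⟨F', h1, h2, h3⟩ := hf F hFinj hFe
  exact ⟨F', h1, h2, fun i u => h _ _ (h3 i u)⟩

lemma aux_bisim_mono {𝒯 : Finset Template} {P : ℕ → Prop} {G G' : LGraph Λ} {l : ℕ}
    {Z Z₂ : ℕ → ℕ → Prop} (h : IsBisimP 𝒯 P G G' l Z) (hsub : ∀ a b, Z₂ a b → Z a b) :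
    IsBisimP 𝒯 P G G' l Z₂ := by
  cases l with
  | zero => exact fun v v' hz => h v v' (hsub _ _ hz)
  | succ l =>
      obtain ⟨Z', h1, h2⟩ := h
      exact ⟨Z', h1, fun v v' hz => h2 v v' (hsub _ _ hz)⟩

lemma aux_bisim_refl {𝒯 : Finset Template} {P : ℕ → Prop} {G : LGraph Λ} :
    ∀ l, IsBisimP 𝒯 P G G l (fun a b => a = b)
  | 0 => fun v v' h => by rw [h]
  | l+1 => by
      refine ⟨fun a b => a = b, aux_bisim_refl l, ?_⟩
      rintro v v' rfl
      refine ⟨rfl, fun T hT k hk => ⟨?_, ?_⟩⟩ <;>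
        exact fun F hFinj hFe => ⟨F, hFinj, hFe, fun i u => rfl⟩

lemma aux_bisim_swap {𝒯 : Finset Template} {P : ℕ → Prop} {G G' : LGraph Λ} :
    ∀ l {Z : ℕ → ℕ → Prop}, IsBisimP 𝒯 P G G' l Z →
      IsBisimP 𝒯 P G' G l (fun a b => Z b a)
  | 0, Z, h => fun v v' hz => (h v' v hz).symm
  | l+1, Z, h => by
      obtain ⟨Z', h1, h2⟩ := h
      refine ⟨fun a b => Z' b a, aux_bisim_swap l h1, ?_⟩
      intro v v' hz
      obtain ⟨hz', hforth⟩ := h2 v' v hz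
      refine ⟨hz', fun T hT k hk => ⟨(hforth T hT k hk).2, ?_⟩⟩
      exact aux_forth_mono (fun a b h => h) (hforth T hT k hk).1

lemma aux_forth_comp {Z₁ Z₂ : ℕ → ℕ → Prop} {T : Template} {G G' G'' : LGraph Λ}
    {v v' v'' k : ℕ} (h1 : Forth Z₁ T G G' v v' k) (h2 : Forth Z₂ T G' G'' v' v'' k) :
    Forth (fun a c => ∃ b, Z₁ a b ∧ Z₂ b c) T G G'' v v'' k := by
  intro F hFinj hFe
  obtain ⟨F', hi, he, hz⟩ := h1 F hFinj hFe
  obtain ⟨F'', hi', he', hz'⟩ := h2 F' hi he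
  exact ⟨F'', hi', he', fun i u => ⟨F' i u, hz i u, hz' i u⟩⟩

lemma aux_bisim_comp {𝒯 : Finset Template} {P : ℕ → Prop} {G G' G'' : LGraph Λ} :
    ∀ l {Z₁ Z₂ : ℕ → ℕ → Prop}, IsBisimP 𝒯 P G G' l Z₁ → IsBisimP 𝒯 P G' G'' l Z₂ →
      IsBisimP 𝒯 P G G'' l (fun a c => ∃ b, Z₁ a b ∧ Z₂ b c)
  | 0, Z₁, Z₂, h1, h2 => by
      rintro v v'' ⟨b, hab, hbc⟩
      exact (h1 v b hab).trans (h2 b v'' hbc)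
  | l+1, Z₁, Z₂, h1, h2 => by
      obtain ⟨Z₁', h11, h12⟩ := h1
      obtain ⟨Z₂', h21, h22⟩ := h2
      refine ⟨_, aux_bisim_comp l h11 h21, ?_⟩
      rintro v v'' ⟨b, hab, hbc⟩
      obtain ⟨hz1, hf1⟩ := h12 v b hab
      obtain ⟨hz2, hf2⟩ := h22 b v'' hbc
      refine ⟨⟨b, hz1, hz2⟩, fun T hT k hk =>
        ⟨aux_forth_comp (hf1 T hT k hk).1 (hf2 T hT k hk).1, ?_⟩⟩
      have := aux_forth_comp (hf2 T hT k hk).2 (hf1 T hT k hk).2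
      exact aux_forth_mono (fun a c h => ⟨h.choose, h.choose_spec.2, h.choose_spec.1⟩) this

lemma aux_gb_refl {𝒯 : Finset Template} {G : LGraph Λ} (l v : ℕ) : GBisimilar 𝒯 l G v G v :=
  ⟨_, aux_bisim_refl l, rfl⟩

lemma aux_gb_symm {𝒯 : Finset Template} {l : ℕ} {G G' : LGraph Λ} {v v' : ℕ}
    (h : GBisimilar 𝒯 l G v G' v') : GBisimilar 𝒯 l G' v' G v := by
  obtain ⟨Z, h1, h2⟩ := h
  exact ⟨_, aux_bisim_swap l h1, h2⟩

lemma aux_gb_trans {𝒯 : Finset Template} {l : ℕ} {G G' G'' : LGraph Λ} {u v w : ℕ}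
    (h1 : GBisimilar 𝒯 l G u G' v) (h2 : GBisimilar 𝒯 l G' v G'' w) :
    GBisimilar 𝒯 l G u G'' w := by
  obtain ⟨Z₁, ha, hb⟩ := h1
  obtain ⟨Z₂, hc, hd⟩ := h2
  exact ⟨_, aux_bisim_comp l ha hc, v, hb, hd⟩

lemma aux_isBisim_gb {𝒯 : Finset Template} {G G' : LGraph Λ} :
    ∀ l, IsBisimP 𝒯 (fun k => 1 ≤ k) G G' l (fun a b => GBisimilar 𝒯 l G a G' b)
  | 0 => by
      rintro v v' ⟨Z, h1, h2⟩
      exact h1 v v' h2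
  | l+1 => by
      refine ⟨fun a b => GBisimilar 𝒯 l G a G' b, aux_isBisim_gb l, ?_⟩
      rintro v v' ⟨Z, hZ, hz⟩
      obtain ⟨Z', h1, h2⟩ := hZ
      obtain ⟨hz', hforth⟩ := h2 v v' hz
      refine ⟨⟨Z', h1, hz'⟩, fun T hT k hk =>
        ⟨aux_forth_mono (fun a b h => ⟨Z', h1, h⟩) (hforth T hT k hk).1,
         aux_forth_mono (fun a b h => ⟨Z', h1, h⟩) (hforth T hT k hk).2⟩⟩

end AuxProofs

section AuxProofs2

variable {AP : Type} [Fintype AP]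

lemma aux_sat_bigConj {G : LGraph (AP → Bool)} {v : ℕ} :
    ∀ L : List (GML AP), Sat G (bigConj L) v ↔ ∀ φ ∈ L, Sat G φ v
  | [] => by simp [bigConj, Sat]
  | φ :: rest => by
      simp [bigConj, Sat, aux_sat_bigConj rest]

lemma aux_sat_charU_zero {𝒯 : Finset Template} {G G' : LGraph (AP → Bool)} {w w' : ℕ} :
    Sat G' (charU 𝒯 0 G w) w' ↔ G'.lab w' = G.lab w := by
  rw [charU, aux_sat_bigConj]
  simp only [List.mem_map, Finset.mem_toList, Finset.mem_univ, true_and]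
  constructor
  · intro h
    funext p
    have := h _ ⟨p, rfl⟩
    by_cases hp : G.lab w p = true
    · simp only [hp, if_pos] at this
      rw [hp]; exact this
    · simp only [hp, if_neg] at this
      have : ¬ G'.lab w' p = true := this
      simp only [Bool.not_eq_true] at this hp
      rw [this, hp]
  · rintro h φ ⟨p, rfl⟩
    by_cases hp : G.lab w p = true
    · simp only [hp, if_pos]
      show G'.lab w' p = true
      rw [h, hp]
    · simp only [hp, if_neg]
      show ¬ G'.lab w' p = true
      rw [h]; exact hp

lemma aux_Scard_top {G : LGraph (AP → Bool)} {T : Template} {w : ℕ} :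
    Scard G T w (fun _ => GML.top) = (embFinset T G w).card := by
  simp [Scard, Sat]

lemma aux_sat_charU_succ {𝒯 : Finset Template} {G G' : LGraph (AP → Bool)} {l w w' : ℕ} :
    Sat G' (charU 𝒯 (l+1) G w) w' ↔
      Sat G' (charU 𝒯 l G w) w' ∧ ∀ T ∈ 𝒯,
        (∀ f ∈ embFinset T G w,
          Scard G T w (fun i => charU 𝒯 l G (f i.succ)) ≤
            ((embFinset T G' w').filter
              (fun g => ∀ i : Fin T.n, Sat G' (charU 𝒯 l G (f i.succ)) (g i.succ))).card) ∧
        (embFinset T G' w').card ≤ (embFinset T G w).card := by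
  rw [charU]
  show Sat G' (GML.and _ _) w' ↔ _
  rw [show ∀ a b : GML AP, Sat G' (GML.and a b) w' ↔ (Sat G' a w' ∧ Sat G' b w')
    from fun a b => Iff.rfl]
  rw [aux_sat_bigConj]
  apply and_congr_right'
  constructor
  · intro h T hT
    have hT' := h _ (List.mem_map.2 ⟨T, Finset.mem_toList.2 hT, rfl⟩)
    obtain ⟨h1, h2⟩ := hT'
    constructor
    · intro f hf
      have := (aux_sat_bigConj _).1 h1 _
        (List.mem_map.2 ⟨f, Finset.mem_toList.2 hf, rfl⟩)
      exact this
    · have h2' : ¬ Sat G' (GML.dia T (Scard G T w (fun _ => GML.top) + 1)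
          (fun _ => GML.top)) w' := h2
      rw [show Sat G' (GML.dia T (Scard G T w (fun _ => GML.top) + 1)
          (fun _ => GML.top)) w' ↔ Scard G T w (fun _ => GML.top) + 1 ≤
            ((embFinset T G' w').filter
              (fun f => ∀ i : Fin T.n, Sat G' GML.top (f i.succ))).card from Iff.rfl] at h2'
      rw [not_le] at h2'
      have : ((embFinset T G' w').filter
          (fun f => ∀ i : Fin T.n, Sat G' GML.top (f i.succ))) = embFinset T G' w' := by
        simp [Sat]
      rw [this, aux_Scard_top] at h2'
      omega
  · intro h φ hφ
    obtain ⟨T, hT, rfl⟩ := List.mem_map.1 hφ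
    rw [Finset.mem_toList] at hT
    obtain ⟨h1, h2⟩ := h T hT
    constructor
    · rw [aux_sat_bigConj]
      intro ψ hψ
      obtain ⟨f, hf, rfl⟩ := List.mem_map.1 hψ
      rw [Finset.mem_toList] at hf
      exact h1 f hf
    · show ¬ Sat G' (GML.dia T (Scard G T w (fun _ => GML.top) + 1) (fun _ => GML.top)) w'
      rw [show Sat G' (GML.dia T (Scard G T w (fun _ => GML.top) + 1)
          (fun _ => GML.top)) w' ↔ Scard G T w (fun _ => GML.top) + 1 ≤
            ((embFinset T G' w').filter
              (fun f => ∀ i : Fin T.n, Sat G' GML.top (f i.succ))).card from Iff.rfl]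
      have : ((embFinset T G' w').filter
          (fun f => ∀ i : Fin T.n, Sat G' GML.top (f i.succ))) = embFinset T G' w' := by
        simp [Sat]
      rw [this, aux_Scard_top]
      omega

end AuxProofs2

section AuxProofs3

set_option linter.unusedSectionVars false

lemma aux_exists_injOn {α β : Type} [Nonempty β] (s : Finset α) (t : Finset β)
    (h : s.card ≤ t.card) : ∃ e : α → β, Set.InjOn e ↑s ∧ ∀ g ∈ s, e g ∈ t := by
  classical
  refine ⟨fun a => if ha : a ∈ s then
    ((t.equivFin.symm (Fin.castLE h (s.equivFin ⟨a, ha⟩))) : t).1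
    else Classical.arbitrary β, ?_, ?_⟩
  · intro a ha b hb hab
    rw [Finset.mem_coe] at ha hb
    simp only [dif_pos ha, dif_pos hb] at hab
    have := Subtype.val_injective hab
    have := t.equivFin.symm.injective this
    have := Fin.castLE_injective h this
    have := s.equivFin.injective this
    exact congrArg Subtype.val (this : (⟨a, ha⟩ : {x // x ∈ s}) = ⟨b, hb⟩)
  · intro g hg
    simp only [dif_pos hg]
    exact ((t.equivFin.symm (Fin.castLE h (s.equivFin ⟨g, hg⟩)))).2

lemma aux_exists_matching {F : Type} [Nonempty F] (P : Finset (Finset F × Finset F))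
    (hdisj : ∀ p ∈ P, ∀ q ∈ P, p ≠ q → Disjoint p.1 q.1)
    (hcard : ∀ p ∈ P, p.2.card ≤ p.1.card)
    (E' : Finset F) (hcover : ∀ g ∈ E', ∃ p ∈ P, g ∈ p.2) :
    ∃ φ : F → F, Set.InjOn φ ↑E' ∧ ∀ g ∈ E', ∃ p ∈ P, g ∈ p.2 ∧ φ g ∈ p.1 := by
  classical
  have H : ∀ p : Finset F × Finset F, ∃ e : F → F,
      p ∈ P → (Set.InjOn e ↑p.2 ∧ ∀ g ∈ p.2, e g ∈ p.1) := by
    intro p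
    by_cases hp : p ∈ P
    · obtain ⟨e, he1, he2⟩ := aux_exists_injOn p.2 p.1 (hcard p hp)
      exact ⟨e, fun _ => ⟨he1, he2⟩⟩
    · exact ⟨fun _ => Classical.arbitrary F, fun h => absurd h hp⟩
  choose ι hι using H
  have Hpk : ∀ g : F, ∃ p : Finset F × Finset F, g ∈ E' → (p ∈ P ∧ g ∈ p.2) := by
    intro g
    by_cases hg : g ∈ E'
    · obtain ⟨p, hp1, hp2⟩ := hcover g hg
      exact ⟨p, fun _ => ⟨hp1, hp2⟩⟩
    · exact ⟨(∅, ∅), fun h => absurd h hg⟩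
  choose pk hpk using Hpk
  refine ⟨fun g => ι (pk g) g, ?_, ?_⟩
  · intro g₁ hg₁ g₂ hg₂ heq
    rw [Finset.mem_coe] at hg₁ hg₂
    obtain ⟨hp₁, hm₁⟩ := hpk g₁ hg₁
    obtain ⟨hp₂, hm₂⟩ := hpk g₂ hg₂
    have heq' : ι (pk g₁) g₁ = ι (pk g₂) g₂ := heq
    by_cases hpp : pk g₁ = pk g₂
    · rw [← hpp] at hm₂ heq'
      exact (hι _ hp₁).1 (Finset.mem_coe.2 hm₁) (Finset.mem_coe.2 hm₂) heq'
    · exfalso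
      have h1 : ι (pk g₁) g₁ ∈ (pk g₁).1 := (hι _ hp₁).2 g₁ hm₁
      have h2 : ι (pk g₂) g₂ ∈ (pk g₂).1 := (hι _ hp₂).2 g₂ hm₂
      rw [← heq'] at h2
      exact (Finset.disjoint_left.1 (hdisj _ hp₁ _ hp₂ hpp)) h1 h2
  · intro g hg
    obtain ⟨hp, hm⟩ := hpk g hg
    exact ⟨pk g, hp, hm, (hι _ hp).2 g hm⟩

lemma aux_counting {F : Type} [Nonempty F] [DecidableEq F] (E E' : Finset F)
    (B A : F → Finset F)
    (hBsub : ∀ f, B f ⊆ E) (hAsub : ∀ f, A f ⊆ E')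
    (hrefl : ∀ f ∈ E, f ∈ B f)
    (hB : ∀ f ∈ E, ∀ g ∈ E, ¬ Disjoint (B f) (B g) → B f = B g ∧ A f = A g)
    (hA : ∀ f ∈ E, ∀ g ∈ E, ¬ Disjoint (A f) (A g) → B f = B g ∧ A f = A g)
    (hBA : ∀ f ∈ E, (B f).card ≤ (A f).card)
    (hE'E : E'.card ≤ E.card) :
    ∃ φ ψ : F → F, Set.InjOn φ ↑E' ∧ (∀ g ∈ E', ∃ f ∈ E, g ∈ A f ∧ φ g ∈ B f) ∧
      Set.InjOn ψ ↑E ∧ (∀ g ∈ E, ∃ f ∈ E, g ∈ B f ∧ ψ g ∈ A f) := by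
  classical
  set P : Finset (Finset F × Finset F) := E.image (fun f => (B f, A f)) with hP
  have hmem : ∀ p ∈ P, ∃ f ∈ E, p = (B f, A f) := by
    intro p hp
    obtain ⟨f, hf, hfp⟩ := Finset.mem_image.1 hp
    exact ⟨f, hf, hfp.symm⟩
  have hdisj : ∀ p ∈ P, ∀ q ∈ P, p ≠ q → Disjoint p.1 q.1 ∧ Disjoint p.2 q.2 := by
    intro p hp q hq hpq
    obtain ⟨f, hf, rfl⟩ := hmem p hp
    obtain ⟨g, hg, rfl⟩ := hmem q hq
    constructor
    · by_contra hd
      obtain ⟨h1, h2⟩ := hB f hf g hg hd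
      exact hpq (by rw [h1, h2])
    · by_contra hd
      obtain ⟨h1, h2⟩ := hA f hf g hg hd
      exact hpq (by rw [h1, h2])
  have hcov1 : E = P.biUnion Prod.fst := by
    apply Finset.Subset.antisymm
    · intro g hg
      exact Finset.mem_biUnion.2 ⟨(B g, A g), Finset.mem_image.2 ⟨g, hg, rfl⟩, hrefl g hg⟩
    · intro g hg
      obtain ⟨p, hp, hgp⟩ := Finset.mem_biUnion.1 hg
      obtain ⟨f, hf, rfl⟩ := hmem p hp
      exact hBsub f hgp
  have hcardE : E.card = ∑ p ∈ P, p.1.card := by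
    rw [hcov1]
    exact Finset.card_biUnion (fun p hp q hq hpq => (hdisj p hp q hq hpq).1)
  have hsub2 : P.biUnion Prod.snd ⊆ E' := by
    intro g hg
    obtain ⟨p, hp, hgp⟩ := Finset.mem_biUnion.1 hg
    obtain ⟨f, hf, rfl⟩ := hmem p hp
    exact hAsub f hgp
  have hcard2 : (P.biUnion Prod.snd).card = ∑ p ∈ P, p.2.card :=
    Finset.card_biUnion (fun p hp q hq hpq => (hdisj p hp q hq hpq).2)
  have hptw : ∀ p ∈ P, p.1.card ≤ p.2.card := by
    intro p hp
    obtain ⟨f, hf, rfl⟩ := hmem p hp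
    exact hBA f hf
  have hle : ∑ p ∈ P, p.2.card ≤ ∑ p ∈ P, p.1.card := by
    calc ∑ p ∈ P, p.2.card = (P.biUnion Prod.snd).card := hcard2.symm
    _ ≤ E'.card := Finset.card_le_card hsub2
    _ ≤ E.card := hE'E
    _ = ∑ p ∈ P, p.1.card := hcardE
  have hsumeq : ∑ p ∈ P, p.1.card = ∑ p ∈ P, p.2.card :=
    le_antisymm (Finset.sum_le_sum hptw) hle
  have hcardeq : ∀ p ∈ P, p.1.card = p.2.card :=
    (Finset.sum_eq_sum_iff_of_le hptw).1 hsumeq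
  have hcovE' : P.biUnion Prod.snd = E' := by
    apply Finset.eq_of_subset_of_card_le hsub2
    rw [hcard2, ← hsumeq, ← hcardE]
    exact hE'E
  -- φ : E' → E
  obtain ⟨φ, hφ1, hφ2⟩ := aux_exists_matching P
    (fun p hp q hq hpq => (hdisj p hp q hq hpq).1)
    (fun p hp => (hcardeq p hp).ge) E'
    (fun g hg => by
      rw [← hcovE'] at hg
      obtain ⟨p, hp, hgp⟩ := Finset.mem_biUnion.1 hg
      exact ⟨p, hp, hgp⟩)
  -- ψ : E → E'
  obtain ⟨ψ, hψ1, hψ2⟩ := aux_exists_matching (P.image (fun p => (p.2, p.1)))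
    (by
      intro p hp q hq hpq
      obtain ⟨p', hp', rfl⟩ := Finset.mem_image.1 hp
      obtain ⟨q', hq', rfl⟩ := Finset.mem_image.1 hq
      exact (hdisj p' hp' q' hq' (by
        intro h; apply hpq; rw [h])).2)
    (by
      intro p hp
      obtain ⟨p', hp', rfl⟩ := Finset.mem_image.1 hp
      exact (hcardeq p' hp').le) E
    (fun g hg => ⟨(A g, B g),
      Finset.mem_image.2 ⟨(B g, A g), Finset.mem_image.2 ⟨g, hg, rfl⟩, rfl⟩, hrefl g hg⟩)
  refine ⟨φ, ψ, hφ1, ?_, hψ1, ?_⟩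
  · intro g hg
    obtain ⟨p, hp, h1, h2⟩ := hφ2 g hg
    obtain ⟨f, hf, rfl⟩ := hmem p hp
    exact ⟨f, hf, h1, h2⟩
  · intro g hg
    obtain ⟨p, hp, h1, h2⟩ := hψ2 g hg
    obtain ⟨p', hp', rfl⟩ := Finset.mem_image.1 hp
    obtain ⟨f, hf, rfl⟩ := hmem p' hp'
    exact ⟨f, hf, h1, h2⟩

end AuxProofs3

section AuxProofs4

lemma aux_forth_of_sat {AP : Type} [Fintype AP] {𝒯 : Finset Template} {l : ℕ}
    (IH : ∀ (G G' : LGraph (AP → Bool)) (v v' : ℕ), v ∈ G.verts → v' ∈ G'.verts →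
      (Sat G' (charU 𝒯 l G v) v' ↔ GBisimilar 𝒯 l G' v' G v))
    {G G' : LGraph (AP → Bool)} {a b : ℕ} (ha : a ∈ G'.verts) (hb : b ∈ G.verts)
    (hsat : Sat G' (charU 𝒯 (l+1) G b) a) {T : Template} (hT : T ∈ 𝒯) (k : ℕ) :
    Forth (fun x y => x ∈ G'.verts ∧ y ∈ G.verts ∧ Sat G' (charU 𝒯 l G y) x) T G' G a b k ∧
    Forth (fun x y => y ∈ G'.verts ∧ x ∈ G.verts ∧ Sat G' (charU 𝒯 l G x) y) T G G' b a k := by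
  classical
  rw [aux_sat_charU_succ] at hsat
  obtain ⟨hsat0, hsatT⟩ := hsat
  obtain ⟨hdia, hcard'⟩ := hsatT T hT
  set E : Finset (Fin (T.n+1) → ℕ) := embFinset T G b with hE
  set E' : Finset (Fin (T.n+1) → ℕ) := embFinset T G' a with hE'
  set B : (Fin (T.n+1) → ℕ) → Finset (Fin (T.n+1) → ℕ) := fun f =>
    E.filter (fun g => ∀ i : Fin T.n, Sat G (charU 𝒯 l G (f i.succ)) (g i.succ)) with hB
  set A : (Fin (T.n+1) → ℕ) → Finset (Fin (T.n+1) → ℕ) := fun f =>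
    E'.filter (fun g => ∀ i : Fin T.n, Sat G' (charU 𝒯 l G (f i.succ)) (g i.succ)) with hA
  have hEv : ∀ f ∈ E, ∀ u, f u ∈ G.verts := fun f hf u => (aux_mem_embFinset.1 hf).2.2.1 u
  have hEv' : ∀ f ∈ E', ∀ u, f u ∈ G'.verts := fun f hf u => (aux_mem_embFinset.1 hf).2.2.1 u
  have hsatrefl : ∀ x ∈ G.verts, Sat G (charU 𝒯 l G x) x :=
    fun x hx => (IH G G x x hx hx).2 (aux_gb_refl l x)
  have hBgb : ∀ f ∈ E, ∀ g, g ∈ B f → ∀ i : Fin T.n,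
      GBisimilar 𝒯 l G (g i.succ) G (f i.succ) := by
    intro f hf g hg i
    have hgE : g ∈ E := (Finset.mem_filter.1 hg).1
    exact (IH G G (f i.succ) (g i.succ) (hEv f hf i.succ) (hEv g hgE i.succ)).1
      ((Finset.mem_filter.1 hg).2 i)
  have hAgb : ∀ f ∈ E, ∀ g, g ∈ A f → ∀ i : Fin T.n,
      GBisimilar 𝒯 l G' (g i.succ) G (f i.succ) := by
    intro f hf g hg i
    have hgE : g ∈ E' := (Finset.mem_filter.1 hg).1
    exact (IH G G' (f i.succ) (g i.succ) (hEv f hf i.succ) (hEv' g hgE i.succ)).1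
      ((Finset.mem_filter.1 hg).2 i)
  have hBmem : ∀ f ∈ E, ∀ g ∈ E, (g ∈ B f ↔ ∀ i : Fin T.n,
      GBisimilar 𝒯 l G (g i.succ) G (f i.succ)) := by
    intro f hf g hg
    refine ⟨hBgb f hf g, fun h => Finset.mem_filter.2 ⟨hg, fun i =>
      (IH G G (f i.succ) (g i.succ) (hEv f hf i.succ) (hEv g hg i.succ)).2 (h i)⟩⟩
  have hAmem : ∀ f ∈ E, ∀ g ∈ E', (g ∈ A f ↔ ∀ i : Fin T.n,
      GBisimilar 𝒯 l G' (g i.succ) G (f i.succ)) := by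
    intro f hf g hg
    refine ⟨hAgb f hf g, fun h => Finset.mem_filter.2 ⟨hg, fun i =>
      (IH G G' (f i.succ) (g i.succ) (hEv f hf i.succ) (hEv' g hg i.succ)).2 (h i)⟩⟩
  have hsim_of : ∀ f ∈ E, ∀ g ∈ E,
      (∀ i : Fin T.n, GBisimilar 𝒯 l G (f i.succ) G (g i.succ)) →
      B f = B g ∧ A f = A g := by
    intro f hf g hg hsim
    constructor
    · ext h
      by_cases hhE : h ∈ E
      · rw [hBmem f hf h hhE, hBmem g hg h hhE]
        exact ⟨fun hh i => aux_gb_trans (hh i) (hsim i),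
               fun hh i => aux_gb_trans (hh i) (aux_gb_symm (hsim i))⟩
      · constructor <;> (intro hh; exact absurd ((Finset.filter_subset _ _) hh) hhE)
    · ext h
      by_cases hhE : h ∈ E'
      · rw [hAmem f hf h hhE, hAmem g hg h hhE]
        exact ⟨fun hh i => aux_gb_trans (hh i) (hsim i),
               fun hh i => aux_gb_trans (hh i) (aux_gb_symm (hsim i))⟩
      · constructor <;> (intro hh; exact absurd ((Finset.filter_subset _ _) hh) hhE)
  have hBkey : ∀ f ∈ E, ∀ g ∈ E, ¬ Disjoint (B f) (B g) → B f = B g ∧ A f = A g := by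
    intro f hf g hg hd
    rw [Finset.not_disjoint_iff] at hd
    obtain ⟨h, h1, h2⟩ := hd
    exact hsim_of f hf g hg (fun i =>
      aux_gb_trans (aux_gb_symm (hBgb f hf h h1 i)) (hBgb g hg h h2 i))
  have hAkey : ∀ f ∈ E, ∀ g ∈ E, ¬ Disjoint (A f) (A g) → B f = B g ∧ A f = A g := by
    intro f hf g hg hd
    rw [Finset.not_disjoint_iff] at hd
    obtain ⟨h, h1, h2⟩ := hd
    exact hsim_of f hf g hg (fun i =>
      aux_gb_trans (aux_gb_symm (hAgb f hf h h1 i)) (hAgb g hg h h2 i))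
  have hBA : ∀ f ∈ E, (B f).card ≤ (A f).card := by
    intro f hf
    exact hdia f hf
  obtain ⟨φ, ψ, hφinj, hφspec, hψinj, hψspec⟩ := aux_counting E E' B A
    (fun f => Finset.filter_subset _ _) (fun f => Finset.filter_subset _ _)
    (fun f hf => Finset.mem_filter.2 ⟨hf, fun i => hsatrefl _ (hEv f hf i.succ)⟩)
    hBkey hAkey hBA hcard'
  constructor
  · intro F hFinj hFe
    have hFE' : ∀ i, F i ∈ E' := fun i => aux_mem_embFinset.2 (hFe i)
    refine ⟨fun i => φ (F i), ?_, ?_, ?_⟩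
    · intro i j hij
      exact hFinj (hφinj (Finset.mem_coe.2 (hFE' i)) (Finset.mem_coe.2 (hFE' j)) hij)
    · intro i
      obtain ⟨f, hf, h1, h2⟩ := hφspec (F i) (hFE' i)
      exact aux_mem_embFinset.1 ((Finset.filter_subset _ _) h2)
    · intro i u
      obtain ⟨f, hf, h1, h2⟩ := hφspec (F i) (hFE' i)
      have hφE : φ (F i) ∈ E := (Finset.filter_subset _ _) h2
      refine Fin.cases ?_ ?_ u
      · have e1 : F i 0 = a := (hFe i).2.1
        have e2 : φ (F i) 0 = b := (aux_mem_embFinset.1 hφE).2.1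
        refine ⟨?_, ?_, ?_⟩
        · show F i 0 ∈ G'.verts
          rw [e1]; exact ha
        · show φ (F i) 0 ∈ G.verts
          rw [e2]; exact hb
        · show Sat G' (charU 𝒯 l G (φ (F i) 0)) (F i 0)
          rw [e1, e2]; exact hsat0
      · intro j
        refine ⟨hEv' (F i) (hFE' i) j.succ, hEv (φ (F i)) hφE j.succ, ?_⟩
        have s1 : GBisimilar 𝒯 l G' (F i j.succ) G (f j.succ) := hAgb f hf (F i) h1 j
        have s2 : GBisimilar 𝒯 l G (φ (F i) j.succ) G (f j.succ) := hBgb f hf (φ (F i)) h2 j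
        exact (IH G G' (φ (F i) j.succ) (F i j.succ)
          (hEv (φ (F i)) hφE j.succ) (hEv' (F i) (hFE' i) j.succ)).2
          (aux_gb_trans s1 (aux_gb_symm s2))
  · intro F hFinj hFe
    have hFE : ∀ i, F i ∈ E := fun i => aux_mem_embFinset.2 (hFe i)
    refine ⟨fun i => ψ (F i), ?_, ?_, ?_⟩
    · intro i j hij
      exact hFinj (hψinj (Finset.mem_coe.2 (hFE i)) (Finset.mem_coe.2 (hFE j)) hij)
    · intro i
      obtain ⟨f, hf, h1, h2⟩ := hψspec (F i) (hFE i)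
      exact aux_mem_embFinset.1 ((Finset.filter_subset _ _) h2)
    · intro i u
      obtain ⟨f, hf, h1, h2⟩ := hψspec (F i) (hFE i)
      have hψE' : ψ (F i) ∈ E' := (Finset.filter_subset _ _) h2
      refine Fin.cases ?_ ?_ u
      · have e1 : F i 0 = b := (hFe i).2.1
        have e2 : ψ (F i) 0 = a := (aux_mem_embFinset.1 hψE').2.1
        refine ⟨?_, ?_, ?_⟩
        · show ψ (F i) 0 ∈ G'.verts
          rw [e2]; exact ha
        · show F i 0 ∈ G.verts
          rw [e1]; exact hb
        · show Sat G' (charU 𝒯 l G (F i 0)) (ψ (F i) 0)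
          rw [e1, e2]; exact hsat0
      · intro j
        refine ⟨hEv' (ψ (F i)) hψE' j.succ, hEv (F i) (hFE i) j.succ, ?_⟩
        have s1 : GBisimilar 𝒯 l G' (ψ (F i) j.succ) G (f j.succ) := hAgb f hf (ψ (F i)) h2 j
        have s2 : GBisimilar 𝒯 l G (F i j.succ) G (f j.succ) := hBgb f hf (F i) h1 j
        exact (IH G G' (F i j.succ) (ψ (F i) j.succ)
          (hEv (F i) (hFE i) j.succ) (hEv' (ψ (F i)) hψE' j.succ)).2
          (aux_gb_trans s1 (aux_gb_symm s2))

lemma aux_main {AP : Type} [Fintype AP] (𝒯 : Finset Template) :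
    ∀ (l : ℕ) (G G' : LGraph (AP → Bool)) (v v' : ℕ), v ∈ G.verts → v' ∈ G'.verts →
      (Sat G' (charU 𝒯 l G v) v' ↔ GBisimilar 𝒯 l G' v' G v)
  | 0, G, G', v, v' => by
      intro hv hv'
      rw [aux_sat_charU_zero]
      constructor
      · intro h
        exact ⟨fun x y => G'.lab x = G.lab y, fun x y hxy => hxy, h⟩
      · rintro ⟨Z, hZ, hz⟩
        exact hZ v' v hz
  | l+1, G, G', v, v' => by
      intro hv hv'
      have IH := aux_main (AP := AP) 𝒯 l
      constructor
      · intro hsat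
        have hsat0 : Sat G' (charU 𝒯 l G v) v' := (aux_sat_charU_succ.1 hsat).1
        refine ⟨fun x y => x ∈ G'.verts ∧ y ∈ G.verts ∧ Sat G' (charU 𝒯 (l+1) G y) x,
          ?_, ⟨hv', hv, hsat⟩⟩
        refine ⟨fun x y => x ∈ G'.verts ∧ y ∈ G.verts ∧ Sat G' (charU 𝒯 l G y) x, ?_, ?_⟩
        · exact aux_bisim_mono (aux_isBisim_gb l)
            (fun x y hz => (IH G G' y x hz.2.1 hz.1).1 hz.2.2)
        · rintro x y ⟨hx, hy, hs⟩
          refine ⟨⟨hx, hy, (aux_sat_charU_succ.1 hs).1⟩, fun T hT k hk => ?_⟩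
          exact aux_forth_of_sat IH hx hy hs hT k
      · rintro ⟨Z, hZ, hzv⟩
        obtain ⟨Z', hZ'b, hcond⟩ := hZ
        rw [aux_sat_charU_succ]
        obtain ⟨hz'v, hforth⟩ := hcond v' v hzv
        refine ⟨(IH G G' v v' hv hv').2 ⟨Z', hZ'b, hz'v⟩, ?_⟩
        intro T hT
        constructor
        · intro f hf
          set s := (embFinset T G v).filter
            (fun g => ∀ i : Fin T.n, Sat G (charU 𝒯 l G (f i.succ)) (g i.succ)) with hs
          have hScard : Scard G T v (fun i => charU 𝒯 l G (f i.succ)) = s.card := rfl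
          rcases Nat.eq_zero_or_pos s.card with h0 | hpos
          · rw [hScard, h0]; exact Nat.zero_le _
          · have hfth := (hforth T hT s.card hpos).2
            set F : Fin s.card → (Fin (T.n+1) → ℕ) := fun i => (s.equivFin.symm i).1 with hF
            have hFinj : Function.Injective F :=
              fun i j hij => s.equivFin.symm.injective (Subtype.val_injective hij)
            have hFmem : ∀ i, F i ∈ s := fun i => (s.equivFin.symm i).2
            have hFemb : ∀ i, IsEmb T G v (F i) :=
              fun i => aux_mem_embFinset.1 ((Finset.filter_subset _ _) (hFmem i))
            obtain ⟨F', hF'inj, hF'emb, hF'z⟩ := hfth F hFinj hFemb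
            rw [hScard]
            have hle : (Finset.univ : Finset (Fin s.card)).card ≤
                ((embFinset T G' v').filter
                  (fun g => ∀ i : Fin T.n, Sat G' (charU 𝒯 l G (f i.succ)) (g i.succ))).card := by
              apply Finset.card_le_card_of_injOn F'
              · intro i _
                refine Finset.mem_filter.2 ⟨aux_mem_embFinset.2 (hF'emb i), ?_⟩
                intro j
                have h1 : Sat G (charU 𝒯 l G (f j.succ)) (F i j.succ) :=
                  (Finset.mem_filter.1 (hFmem i)).2 j
                have hFiE : F i ∈ embFinset T G v := (Finset.filter_subset _ _) (hFmem i)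
                have s2 : GBisimilar 𝒯 l G (F i j.succ) G (f j.succ) :=
                  (IH G G (f j.succ) (F i j.succ)
                    ((aux_mem_embFinset.1 hf).2.2.1 j.succ)
                    ((aux_mem_embFinset.1 hFiE).2.2.1 j.succ)).1 h1
                have s1 : GBisimilar 𝒯 l G' (F' i j.succ) G (F i j.succ) :=
                  ⟨Z', hZ'b, hF'z i j.succ⟩
                exact (IH G G' (f j.succ) (F' i j.succ)
                  ((aux_mem_embFinset.1 hf).2.2.1 j.succ)
                  ((hF'emb i).2.2.1 j.succ)).2 (aux_gb_trans s1 s2)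
              · intro i _ j _ hij
                exact hF'inj hij
            simpa using hle
        · rcases Nat.eq_zero_or_pos (embFinset T G' v').card with h0 | hpos
          · rw [h0]; exact Nat.zero_le _
          · have hfth := (hforth T hT (embFinset T G' v').card hpos).1
            set F : Fin (embFinset T G' v').card → (Fin (T.n+1) → ℕ) :=
              fun i => ((embFinset T G' v').equivFin.symm i).1 with hF
            have hFinj : Function.Injective F :=
              fun i j hij =>
                (embFinset T G' v').equivFin.symm.injective (Subtype.val_injective hij)
            have hFemb : ∀ i, IsEmb T G' v' (F i) :=
              fun i => aux_mem_embFinset.1 ((embFinset T G' v').equivFin.symm i).2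
            obtain ⟨F', hF'inj, hF'emb, _⟩ := hfth F hFinj hFemb
            have hle : (Finset.univ : Finset (Fin (embFinset T G' v').card)).card ≤
                (embFinset T G v).card := by
              apply Finset.card_le_card_of_injOn F'
              · exact fun i _ => aux_mem_embFinset.2 (hF'emb i)
              · exact fun i _ j _ hij => hF'inj hij
            simpa using hle

end AuxProofs4

/-- `(G',v') ⊨ χ^l_{(G,v)}` iff `(G',v')` is graded `l`-`𝒯`-bisimilar to
`(G,v)`. -/
theorem char_iff_graded_bisim {AP : Type} [Fintype AP] (𝒯 : Finset Template) (l : ℕ)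
    (G G' : LGraph (AP → Bool)) (v v' : ℕ) (hv : v ∈ G.verts) (hv' : v' ∈ G'.verts) :
    (Sat G' (charU 𝒯 l G v) v' ↔ GBisimilar 𝒯 l G' v' G v) := by
  exact aux_main 𝒯 l G G' v v' hv hv'
end

section
/- Let c ≥ 1, l ∈ ℕ, and let 𝒯 be a finite set of templates. Every class of finite pointed labelled graphs (over a fixed finite proposition set) that is invariant under l-c-𝒯-bisimilarity (i.e., closed under the relation ∼^{l,c}_𝒯) is definable by a GML(𝒯) formula of modal depth l and counting bound c. -/
set_option maxHeartbeats 1000000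

attribute [local instance 10] Classical.propDecidable

/-!
Record for a pointed graph its *capped `l`-type*: its label and, for every template `T ∈ 𝒯`
and every tuple of `(l-1)`-types, the number of embeddings of `T` realising that tuple,
capped at `c`. There are only finitely many such types. Equality of capped types is an
`l`-`c`-`𝒯`-bisimulation: since at most `c` embeddings have to be matched at a time, the
capped counts suffice to match them type by type. Each type is defined by a `GML(𝒯)`
formula of depth `l` and counting bound `c`, so an invariant class is the disjunction of
the formulas of the types it realises.
-/

open Finset Function

lemma mem_embFinset {Λ : Type} {T : Template} {G : LGraph Λ} {w : ℕ}
    {f : Fin (T.n + 1) → ℕ} : f ∈ embFinset T G w ↔ IsEmb T G w f := by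
  simp only [embFinset, mem_filter, Fintype.mem_piFinset, and_iff_right_iff_imp]
  exact fun h => h.2.2.1

lemma Forth.mono {Λ : Type} {Z Z' : ℕ → ℕ → Prop} {T : Template} {G G' : LGraph Λ}
    {v v' k : ℕ} (h : Forth Z T G G' v v' k) (hZ : ∀ a b, Z a b → Z' a b) :
    Forth Z' T G G' v v' k := fun F hF hemb =>
  let ⟨F', hF', hemb', hrel⟩ := h F hF hemb
  ⟨F', hF', hemb', fun i u => hZ _ _ (hrel i u)⟩

lemma exists_injective_match_of_min_card_eq {α ι κ : Type*} [Fintype ι] [DecidableEq κ]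
    {c : ℕ} (hι : Fintype.card ι ≤ c) {A B : Finset α} {τA τB : α → κ}
    (hcount : ∀ t, min c #(A.filter (τA · = t)) = min c #(B.filter (τB · = t)))
    {F : ι → α} (hF : Injective F) (hFA : ∀ i, F i ∈ A) :
    ∃ F' : ι → α, Injective F' ∧ (∀ i, F' i ∈ B) ∧ ∀ i, τB (F' i) = τA (F i) := by
  have hfiber : ∀ t, Nonempty ({i // τA (F i) = t} ↪ B.filter (τB · = t)) := by
    intro t
    apply Function.Embedding.nonempty_of_card_le
    have hA : Fintype.card {i // τA (F i) = t} ≤ #(A.filter (τA · = t)) := by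
      rw [← Fintype.card_coe]
      exact Fintype.card_le_of_injective (fun i => ⟨F i, mem_filter.2 ⟨hFA i, i.2⟩⟩)
        fun i j h => Subtype.ext (hF (congrArg Subtype.val h))
    have hc : Fintype.card {i // τA (F i) = t} ≤ c := (Fintype.card_subtype_le _).trans hι
    rw [Fintype.card_coe]
    have := hcount t
    omega
  let e t := (hfiber t).some
  let F' i := (e (τA (F i)) ⟨i, rfl⟩ : α)
  have hF'B i : F' i ∈ B := (mem_filter.1 (e _ _).2).1
  have hτ i : τB (F' i) = τA (F i) := (mem_filter.1 (e _ _).2).2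
  have he i t (h : τA (F i) = t) : (e t ⟨i, h⟩ : α) = F' i := by subst h; rfl
  refine ⟨F', fun i j hij => ?_, hF'B, hτ⟩
  have ht : τA (F i) = τA (F j) := by rw [← hτ i, ← hτ j, hij]
  have : e (τA (F j)) ⟨i, ht⟩ = e (τA (F j)) ⟨j, rfl⟩ := Subtype.ext ((he i _ ht).trans hij)
  exact congrArg Subtype.val ((e _).injective this)

def CapType (AP : Type) (𝒯 : Finset Template) (c : ℕ) : ℕ → Type
  | 0 => AP → Bool
  | l + 1 => CapType AP 𝒯 c l × ((T : 𝒯) → (Fin T.1.n → CapType AP 𝒯 c l) → Fin (c + 1))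

noncomputable instance CapType.instFintype (AP : Type) [Fintype AP] (𝒯 : Finset Template)
    (c : ℕ) : ∀ l, Fintype (CapType AP 𝒯 c l)
  | 0 => inferInstanceAs (Fintype (AP → Bool))
  | l + 1 =>
    letI := CapType.instFintype AP 𝒯 c l
    inferInstanceAs
      (Fintype (CapType AP 𝒯 c l × ((T : 𝒯) → (Fin T.1.n → CapType AP 𝒯 c l) → Fin (c + 1))))

section CappedTypes

variable {AP : Type} (𝒯 : Finset Template) (c : ℕ)

noncomputable def capType : ∀ l : ℕ, LGraph (AP → Bool) → ℕ → CapType AP 𝒯 c l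
  | 0, G, v => G.lab v
  | l + 1, G, v => (capType l G v, fun T t =>
      ⟨min c #((embFinset T.1 G v).filter fun f => (fun i => capType l G (f i.succ)) = t),
        Nat.lt_succ_of_le (min_le_left _ _)⟩)

variable {𝒯 c}

lemma capType_succ_eq_iff {l : ℕ} {G : LGraph (AP → Bool)} {v : ℕ}
    {τ : CapType AP 𝒯 c (l + 1)} :
    capType 𝒯 c (l + 1) G v = τ ↔ capType 𝒯 c l G v = τ.1 ∧ ∀ T t,
      min c #((embFinset T.1 G v).filter fun f => (fun i => capType 𝒯 c l G (f i.succ)) = t)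
        = τ.2 T t := by
  exact Prod.ext_iff.trans (and_congr Iff.rfl ⟨fun h T t => congrArg Fin.val (congrFun₂ h T t),
    fun h => funext₂ fun T t => Fin.ext (h T t)⟩)

lemma forth_of_capType_eq {l v v' k : ℕ} {G G' : LGraph (AP → Bool)}
    (h : capType 𝒯 c (l + 1) G v = capType 𝒯 c (l + 1) G' v') {T : Template} (hT : T ∈ 𝒯)
    (hk : k ≤ c) :
    Forth (fun a b => capType 𝒯 c l G a = capType 𝒯 c l G' b) T G G' v v' k := by
  intro F hF hemb
  have hcount t := congrArg (fun τ : CapType AP 𝒯 c (l + 1) => (τ.2 ⟨T, hT⟩ t : ℕ)) h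
  obtain ⟨F', hF', hF'B, hτ⟩ := exists_injective_match_of_min_card_eq (by simpa using hk)
    hcount hF fun i => mem_embFinset.2 (hemb i)
  refine ⟨F', hF', fun i => mem_embFinset.1 (hF'B i), fun i u => ?_⟩
  cases u using Fin.cases with
  | zero => rw [(hemb i).2.1, (mem_embFinset.1 (hF'B i)).2.1]; exact congrArg Prod.fst h
  | succ j => exact (congrFun (hτ i) j).symm

lemma isBisimP_capType_eq (G G' : LGraph (AP → Bool)) : ∀ l,
    IsBisimP 𝒯 (fun k => 1 ≤ k ∧ k ≤ c) G G' l
      (fun v v' => capType 𝒯 c l G v = capType 𝒯 c l G' v')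
  | 0 => fun _ _ h => h
  | l + 1 => ⟨_, isBisimP_capType_eq G G' l, fun _ _ h => ⟨congrArg Prod.fst h, fun _ hT _ hk =>
      ⟨forth_of_capType_eq h hT hk.2,
        (forth_of_capType_eq h.symm hT hk.2).mono fun _ _ => Eq.symm⟩⟩⟩

lemma bBisimilar_of_capType_eq {l v v' : ℕ} {G G' : LGraph (AP → Bool)}
    (h : capType 𝒯 c l G v = capType 𝒯 c l G' v') : BBisimilar 𝒯 l c G v G' v' :=
  ⟨_, isBisimP_capType_eq G G' l, h⟩

end CappedTypes

section Formulas

variable {AP : Type}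

@[simp] lemma sat_bigConj {G : LGraph (AP → Bool)} {v : ℕ} {L : List (GML AP)} :
    Sat G (bigConj L) v ↔ ∀ ψ ∈ L, Sat G ψ v := by
  induction L with
  | nil => simp [bigConj, Sat]
  | cons φ L ih => simp [bigConj, Sat, ih]

@[simp] lemma wf_bigConj {𝒯 : Finset Template} {L : List (GML AP)} :
    (bigConj L).Wf 𝒯 ↔ ∀ ψ ∈ L, ψ.Wf 𝒯 := by
  induction L with
  | nil => simp [bigConj, GML.Wf]
  | cons φ L ih => simp [bigConj, GML.Wf, ih]

@[simp] lemma md_bigConj_le {m : ℕ} {L : List (GML AP)} :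
    (bigConj L).md ≤ m ↔ ∀ ψ ∈ L, ψ.md ≤ m := by
  induction L with
  | nil => simp [bigConj, GML.md]
  | cons φ L ih => simp [bigConj, GML.md, ih]

@[simp] lemma cb_bigConj_le {m : ℕ} {L : List (GML AP)} :
    (bigConj L).cb ≤ m ↔ ∀ ψ ∈ L, ψ.cb ≤ m := by
  induction L with
  | nil => simp [bigConj, GML.cb]
  | cons φ L ih => simp [bigConj, GML.cb, ih]

def bigDisj (L : List (GML AP)) : GML AP := .neg (bigConj (L.map .neg))

@[simp] lemma sat_bigDisj {G : LGraph (AP → Bool)} {v : ℕ} {L : List (GML AP)} :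
    Sat G (bigDisj L) v ↔ ∃ ψ ∈ L, Sat G ψ v := by
  simp [bigDisj, Sat]

@[simp] lemma wf_bigDisj {𝒯 : Finset Template} {L : List (GML AP)} :
    (bigDisj L).Wf 𝒯 ↔ ∀ ψ ∈ L, ψ.Wf 𝒯 := by
  simp [bigDisj, GML.Wf]

@[simp] lemma md_bigDisj_le {m : ℕ} {L : List (GML AP)} :
    (bigDisj L).md ≤ m ↔ ∀ ψ ∈ L, ψ.md ≤ m := by
  simp [bigDisj, GML.md]

@[simp] lemma cb_bigDisj_le {m : ℕ} {L : List (GML AP)} :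
    (bigDisj L).cb ≤ m ↔ ∀ ψ ∈ L, ψ.cb ≤ m := by
  simp [bigDisj, GML.cb]

def GML.literal (p : AP) (b : Bool) : GML AP := if b then .prop p else .neg (.prop p)

@[simp] lemma sat_literal {G : LGraph (AP → Bool)} {v : ℕ} {p : AP} {b : Bool} :
    Sat G (GML.literal p b) v ↔ G.lab v p = b := by
  cases b <;> simp [GML.literal, Sat]

@[simp] lemma wf_literal {𝒯 : Finset Template} {p : AP} {b : Bool} :
    (GML.literal p b).Wf 𝒯 := by
  cases b <;> trivial

@[simp] lemma md_literal {p : AP} {b : Bool} : (GML.literal p b).md = 0 := by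
  cases b <;> rfl

@[simp] lemma cb_literal {p : AP} {b : Bool} : (GML.literal p b).cb = 0 := by
  cases b <;> rfl

/-- `min c N = j` for the number `N` of embeddings of `T` whose non-root nodes satisfy `φs`;
the case split keeps every grade between `1` and `c`. -/
def GML.cappedCountEq (T : Template) (c j : ℕ) (φs : Fin T.n → GML AP) : GML AP :=
  .and (if j = 0 then .top else .dia T j φs) (if j < c then .neg (.dia T (j + 1) φs) else .top)

lemma sat_cappedCountEq {T : Template} {c j : ℕ} {φs : Fin T.n → GML AP}
    {G : LGraph (AP → Bool)} {v : ℕ} (hj : j ≤ c) :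
    Sat G (GML.cappedCountEq T c j φs) v ↔
      min c #((embFinset T G v).filter fun f => ∀ i, Sat G (φs i) (f i.succ)) = j := by
  unfold GML.cappedCountEq
  split_ifs <;> simp only [Sat, true_and, and_true, true_iff] <;> omega

lemma wf_cappedCountEq {𝒯 : Finset Template} {T : Template} {c j : ℕ}
    {φs : Fin T.n → GML AP} (hT : T ∈ 𝒯) (h : ∀ i, (φs i).Wf 𝒯) :
    (GML.cappedCountEq T c j φs).Wf 𝒯 := by
  unfold GML.cappedCountEq
  split_ifs <;> simp only [GML.Wf, true_and, and_true, hT, h, implies_true] <;> omega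

lemma md_cappedCountEq_le {T : Template} {c j m : ℕ} {φs : Fin T.n → GML AP}
    (h : ∀ i, (φs i).md ≤ m) : (GML.cappedCountEq T c j φs).md ≤ m + 1 := by
  have := Finset.sup_le fun i (_ : i ∈ univ) => h i
  unfold GML.cappedCountEq
  split_ifs <;> simp only [GML.md] <;> omega

lemma cb_cappedCountEq_le {T : Template} {c j : ℕ} {φs : Fin T.n → GML AP} (hj : j ≤ c)
    (h : ∀ i, (φs i).cb ≤ c) : (GML.cappedCountEq T c j φs).cb ≤ c := by
  have := Finset.sup_le fun i (_ : i ∈ univ) => h i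
  unfold GML.cappedCountEq
  split_ifs <;> simp only [GML.cb] <;> omega

end Formulas

section TypeFormulas

variable {AP : Type} [Fintype AP] (𝒯 : Finset Template) (c : ℕ)

noncomputable def typeFormula : ∀ l : ℕ, CapType AP 𝒯 c l → GML AP
  | 0, τ => bigConj ((univ : Finset AP).toList.map fun p => .literal p (τ p))
  | l + 1, τ => .and (typeFormula l τ.1)
      (bigConj ((univ : Finset (Σ T : 𝒯, Fin T.1.n → CapType AP 𝒯 c l)).toList.map
        fun Tt => .cappedCountEq Tt.1.1 c (τ.2 Tt.1 Tt.2) fun i => typeFormula l (Tt.2 i)))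

variable {𝒯 c}

lemma sat_typeFormula {G : LGraph (AP → Bool)} {v : ℕ} :
    ∀ {l : ℕ} {τ : CapType AP 𝒯 c l}, Sat G (typeFormula 𝒯 c l τ) v ↔ capType 𝒯 c l G v = τ
  | 0, τ => by
    simp only [typeFormula, capType, sat_bigConj, List.forall_mem_map, mem_toList, mem_univ,
      true_implies, sat_literal]
    exact ⟨funext, congrFun⟩
  | l + 1, τ => by
    simp only [typeFormula, Sat, sat_bigConj, List.forall_mem_map, mem_toList, mem_univ,
      true_implies, Sigma.forall, capType_succ_eq_iff, sat_cappedCountEq (Fin.is_le _),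
      sat_typeFormula, funext_iff]

lemma wf_typeFormula : ∀ {l : ℕ} (τ : CapType AP 𝒯 c l), (typeFormula 𝒯 c l τ).Wf 𝒯
  | 0, τ => by simp [typeFormula]
  | l + 1, τ => by
    simp only [typeFormula, GML.Wf, wf_bigConj, List.forall_mem_map]
    exact ⟨wf_typeFormula _, fun Tt _ => wf_cappedCountEq Tt.1.2 fun i => wf_typeFormula _⟩

lemma md_typeFormula_le : ∀ {l : ℕ} (τ : CapType AP 𝒯 c l), (typeFormula 𝒯 c l τ).md ≤ l
  | 0, τ => by
    simp only [typeFormula, md_bigConj_le, List.forall_mem_map, md_literal, le_refl, implies_true]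
  | l + 1, τ => by
    simp only [typeFormula, GML.md, max_le_iff, md_bigConj_le, List.forall_mem_map]
    exact ⟨(md_typeFormula_le _).trans l.le_succ,
      fun Tt _ => md_cappedCountEq_le fun i => md_typeFormula_le _⟩

lemma cb_typeFormula_le : ∀ {l : ℕ} (τ : CapType AP 𝒯 c l), (typeFormula 𝒯 c l τ).cb ≤ c
  | 0, τ => by simp [typeFormula]
  | l + 1, τ => by
    simp only [typeFormula, GML.cb, max_le_iff, cb_bigConj_le, List.forall_mem_map]
    exact ⟨cb_typeFormula_le _,
      fun Tt _ => cb_cappedCountEq_le (Fin.is_le _) fun i => cb_typeFormula_le _⟩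

end TypeFormulas

theorem invariant_class_definable_general {AP : Type} [Fintype AP] (𝒯 : Finset Template)
    (l c : ℕ) (K : Set (LGraph (AP → Bool) × ℕ))
    (hK : ∀ p q : LGraph (AP → Bool) × ℕ, p.2 ∈ p.1.verts → q.2 ∈ q.1.verts →
      BBisimilar 𝒯 l c p.1 p.2 q.1 q.2 → (p ∈ K ↔ q ∈ K)) :
    ∃ φ : GML AP, φ.Wf 𝒯 ∧ φ.md ≤ l ∧ φ.cb ≤ c ∧
      ∀ p : LGraph (AP → Bool) × ℕ, p.2 ∈ p.1.verts → (p ∈ K ↔ Sat p.1 φ p.2) := by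
  let realised : Finset (CapType AP 𝒯 c l) :=
    univ.filter fun τ => ∃ q ∈ K, q.2 ∈ q.1.verts ∧ capType 𝒯 c l q.1 q.2 = τ
  refine ⟨bigDisj (realised.toList.map (typeFormula 𝒯 c l)), ?_, ?_, ?_, fun p hp => ?_⟩
  · simpa [List.forall_mem_map] using fun τ _ => wf_typeFormula τ
  · simpa [List.forall_mem_map] using fun τ _ => md_typeFormula_le τ
  · simpa [List.forall_mem_map] using fun τ _ => cb_typeFormula_le τ
  simp only [sat_bigDisj, List.mem_map, mem_toList, realised, mem_filter, mem_univ, true_and,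
    exists_exists_and_eq_and, sat_typeFormula]
  constructor
  · exact fun hpK => ⟨_, ⟨p, hpK, hp, rfl⟩, rfl⟩
  · rintro ⟨τ, ⟨q, hqK, hq, rfl⟩, hqp⟩
    exact (hK q p hq hp (bBisimilar_of_capType_eq hqp.symm)).1 hqK

/-- Every class of finite pointed labelled graphs that is invariant
under `l`-`c`-`𝒯`-bisimilarity is definable by a `GML(𝒯)` formula of modal depth (at
most) `l` and counting bound (at most) `c`. -/
theorem invariant_class_definable {AP : Type} [Fintype AP] (𝒯 : Finset Template)
    (l c : ℕ) (hc : 1 ≤ c) (K : Set (LGraph (AP → Bool) × ℕ))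
    (hK : ∀ p q : LGraph (AP → Bool) × ℕ, p.2 ∈ p.1.verts → q.2 ∈ q.1.verts →
      BBisimilar 𝒯 l c p.1 p.2 q.1 q.2 → (p ∈ K ↔ q ∈ K)) :
    ∃ φ : GML AP, φ.Wf 𝒯 ∧ φ.md ≤ l ∧ φ.cb ≤ c ∧
      ∀ p : LGraph (AP → Bool) × ℕ, p.2 ∈ p.1.verts → (p ∈ K ↔ Sat p.1 φ p.2) :=
  invariant_class_definable_general 𝒯 l c K hK
end

section
/- Let 𝒯 be a finite set of templates, φ a GML(𝒯) formula, c_max = cb(φ) its counting bound, and l = sd(φ) its syntactic depth. Then there exists a bounded 𝒯-GNN 𝒩 with l layers that captures φ: for every finite labelled graph G (over the fixed finite proposition set) and every node v of G, 𝒩(G,v) = 1 if and only if (G,v) ⊨ φ. -/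
/-!
Every subformula of `φ` gets its own coordinate in the feature vectors, and layer `l` computes
the truth values of all subformulas of syntactic depth at most `l`. Negation and conjunction
are evaluated pointwise by the combination function. For `⟨T⟩^{≥j}(ψ⃗)` the template
aggregation of an embedding `f` counts the root-fixing automorphisms `σ` of `T` for which
`f ∘ σ` satisfies `ψ⃗`; by double counting, the sum of these counts over all embeddings is
`|Aut T| · |S|`, where `S` is the set of embeddings witnessing the modality. So the modality
holds iff that sum reaches `j · |Aut T|`, a comparison that survives capping all multiplicities
at any `c` above every such threshold.
-/

set_option maxHeartbeats 1000000

attribute [local instance 10] Classical.propDecidable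

theorem count_mcap {α : Type} (c : ℕ) (m : Multiset α) (b : α) :
    (mcap c m).count b = min c (m.count b) := by
  rw [mcap, Multiset.count_bind]
  change ∑ x ∈ m.toFinset, _ = _
  simp_rw [Multiset.count_replicate]
  rw [Finset.sum_ite_eq']
  split_ifs with hb
  · rfl
  · simp [Multiset.count_eq_zero_of_notMem (Multiset.mem_toFinset.not.1 hb)]

theorem mcap_mcap {α : Type} (c : ℕ) (m : Multiset α) : mcap c (mcap c m) = mcap c m := by
  ext b
  simp [count_mcap]

theorem toFinset_mcap {α : Type} {c : ℕ} (hc : 1 ≤ c) (m : Multiset α) :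
    (mcap c m).toFinset = m.toFinset := by
  ext b
  simp only [Multiset.mem_toFinset, ← Multiset.count_pos, count_mcap]
  omega

/-- Capping multiplicities at `c` cannot move a sum of naturals across a threshold `K ≤ c`:
either some summand is positive with multiplicity `≥ c`, and then both sums are `≥ c`, or
the cap changes nothing. -/
theorem le_sum_map_mcap_iff {α : Type} (g : α → ℕ) {c K : ℕ} (hc : 1 ≤ c) (hK : K ≤ c)
    (m : Multiset α) :
    K ≤ ((mcap c m).map g).sum ↔ K ≤ (m.map g).sum := by
  rw [Finset.sum_multiset_map_count, Finset.sum_multiset_map_count, toFinset_mcap hc]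
  simp only [count_mcap, smul_eq_mul]
  by_cases hbig : ∃ x ∈ m.toFinset, c ≤ m.count x ∧ 1 ≤ g x
  · obtain ⟨x, hx, hcx, hgx⟩ := hbig
    have hcapped : K ≤ min c (m.count x) * g x := by
      rw [min_eq_left hcx]; nlinarith
    have huncapped : K ≤ m.count x * g x := by nlinarith
    exact iff_of_true
      (hcapped.trans (Finset.single_le_sum (f := fun y => min c (m.count y) * g y)
        (fun _ _ => Nat.zero_le _) hx))
      (huncapped.trans (Finset.single_le_sum (f := fun y => m.count y * g y)
        (fun _ _ => Nat.zero_le _) hx))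
  · push Not at hbig
    rw [Finset.sum_congr rfl fun x hx => ?_]
    rcases Nat.lt_or_ge (m.count x) c with h | h
    · rw [min_eq_right h.le]
    · simp [Nat.lt_one_iff.1 (hbig x hx h)]

namespace Template

def rootAut (T : Template) : Subgroup (Equiv.Perm (Fin (T.n + 1))) where
  carrier := {σ | σ 0 = 0 ∧ (∀ p, p ∈ T.pos ↔ (σ p.1, σ p.2) ∈ T.pos) ∧
    (∀ p, p ∈ T.neg ↔ (σ p.1, σ p.2) ∈ T.neg)}
  one_mem' := by simp
  mul_mem' := by
    rintro σ τ ⟨hσ0, hσpos, hσneg⟩ ⟨hτ0, hτpos, hτneg⟩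
    exact ⟨by simp [hτ0, hσ0], fun p => (hτpos p).trans (hσpos _),
      fun p => (hτneg p).trans (hσneg _)⟩
  inv_mem' := by
    rintro σ ⟨hσ0, hσpos, hσneg⟩
    refine ⟨?_, fun p => ?_, fun p => ?_⟩
    · rw [Equiv.Perm.inv_eq_iff_eq, hσ0]
    · simpa using (hσpos (σ⁻¹ p.1, σ⁻¹ p.2)).symm
    · simpa using (hσneg (σ⁻¹ p.1, σ⁻¹ p.2)).symm

noncomputable def rootAuts (T : Template) : Finset (Equiv.Perm (Fin (T.n + 1))) :=
  Finset.univ.filter (· ∈ T.rootAut)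

theorem mem_rootAuts {T : Template} {σ : Equiv.Perm (Fin (T.n + 1))} :
    σ ∈ T.rootAuts ↔ σ ∈ T.rootAut := by
  simp [rootAuts]

theorem card_rootAuts_pos (T : Template) : 0 < T.rootAuts.card :=
  Finset.card_pos.2 ⟨1, mem_rootAuts.2 T.rootAut.one_mem⟩

theorem rootAut_apply_ne_zero {T : Template} {σ : Equiv.Perm (Fin (T.n + 1))}
    (hσ : σ ∈ T.rootAut) {u : Fin (T.n + 1)} (hu : u ≠ 0) : σ u ≠ 0 := by
  rw [← hσ.1]
  exact σ.injective.ne hu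

/-- Unlike the indicator of `Q` along `lab`, this count is invariant under relabelling by
root-fixing automorphisms, so it is a legal template aggregation. -/
noncomputable def twistedCount {β : Type} (T : Template) (Q : Fin T.n → β → Prop)
    (lab : Fin (T.n + 1) → β) : ℕ :=
  (T.rootAuts.filter fun σ => ∀ i, Q i (lab (σ i.succ))).card

theorem twistedCount_eq_of_rootAut {β : Type} {T : Template} (Q : Fin T.n → β → Prop)
    {σ : Equiv.Perm (Fin (T.n + 1))} (hσ : σ ∈ T.rootAut)
    {lab₁ lab₂ : Fin (T.n + 1) → β}
    (hlab : ∀ u, u ≠ 0 → lab₁ u = lab₂ (σ u)) :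
    T.twistedCount Q lab₁ = T.twistedCount Q lab₂ := by
  refine Finset.card_nbij' (σ * ·) (σ⁻¹ * ·) ?_ ?_ (fun _ _ => by simp) (fun _ _ => by simp)
  · intro τ hτ
    rw [Finset.mem_coe, Finset.mem_filter, mem_rootAuts] at hτ ⊢
    refine ⟨T.rootAut.mul_mem hσ hτ.1, fun i => ?_⟩
    rw [Equiv.Perm.mul_apply, ← hlab _ (rootAut_apply_ne_zero hτ.1 (Fin.succ_ne_zero i))]
    exact hτ.2 i
  · intro τ hτ
    rw [Finset.mem_coe, Finset.mem_filter, mem_rootAuts] at hτ ⊢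
    have hστ : σ⁻¹ * τ ∈ T.rootAut := T.rootAut.mul_mem (T.rootAut.inv_mem hσ) hτ.1
    refine ⟨hστ, fun i => ?_⟩
    rw [hlab _ (rootAut_apply_ne_zero hστ (Fin.succ_ne_zero i))]
    simpa using hτ.2 i

theorem comp_mem_embFinset {Λ : Type} {T : Template} {G : LGraph Λ} {v : ℕ}
    {f : Fin (T.n + 1) → ℕ} (hf : f ∈ embFinset T G v)
    {σ : Equiv.Perm (Fin (T.n + 1))} (hσ : σ ∈ T.rootAut) :
    f ∘ σ ∈ embFinset T G v := by
  obtain ⟨hσ0, hσpos, hσneg⟩ := hσ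
  simp only [embFinset, Finset.mem_filter, Fintype.mem_piFinset] at hf ⊢
  obtain ⟨hmem, hinj, h0, hverts, hpos, hneg⟩ := hf
  exact ⟨fun _ => hmem _, hinj.comp σ.injective, by simp [hσ0, h0], fun _ => hverts _,
    fun p hp => hpos _ ((hσpos p).1 hp), fun p hp => hneg _ ((hσneg p).1 hp)⟩

/-- Double counting over pairs (embedding, automorphism): precomposing with a fixed
automorphism permutes the embeddings. -/
theorem sum_twistedCount_embFinset {Λ : Type} (T : Template) (G : LGraph Λ) (v : ℕ)
    (P : Fin T.n → ℕ → Prop) :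
    ∑ f ∈ embFinset T G v, T.twistedCount P f
      = T.rootAuts.card * ((embFinset T G v).filter fun f => ∀ i, P i (f i.succ)).card := by
  have hperm : ∀ σ ∈ T.rootAuts,
      ((embFinset T G v).filter fun f => ∀ i, P i (f (σ i.succ))).card
        = ((embFinset T G v).filter fun f => ∀ i, P i (f i.succ)).card := by
    intro σ hσ
    rw [mem_rootAuts] at hσ
    refine Finset.card_nbij' (· ∘ σ) (· ∘ ⇑σ⁻¹) ?_ ?_ (fun f _ => by ext; simp)
      (fun f _ => by ext; simp)
    · intro f hf
      rw [Finset.mem_coe, Finset.mem_filter] at hf ⊢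
      exact ⟨comp_mem_embFinset hf.1 hσ, hf.2⟩
    · intro f hf
      rw [Finset.mem_coe, Finset.mem_filter] at hf ⊢
      exact ⟨comp_mem_embFinset hf.1 (T.rootAut.inv_mem hσ), by simpa using hf.2⟩
  calc ∑ f ∈ embFinset T G v, T.twistedCount P f
      = ∑ σ ∈ T.rootAuts,
          ((embFinset T G v).filter fun f => ∀ i, P i (f (σ i.succ))).card := by
        simp only [twistedCount, Finset.card_filter]
        exact Finset.sum_comm
    _ = _ := by rw [Finset.sum_congr rfl hperm, Finset.sum_const, smul_eq_mul]

end Template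

theorem TGNN.feat_succ {𝒯 : Finset Template} {d nAr L : ℕ} (N : TGNN 𝒯 d nAr L)
    (G : LGraph (Fin d → ℝ)) {l : ℕ} (hl : l < L) (v : ℕ) :
    N.feat G (l + 1) v = N.comb ⟨l, hl⟩ (N.feat G l v) fun j => N.agg ⟨l, hl⟩ j
      ((embFinset (N.temp ⟨l, hl⟩ j) G v).val.map
        fun f => N.aggT ⟨l, hl⟩ j fun u => N.feat G l (f u)) := by
  rw [TGNN.feat, dif_pos hl]

namespace GML

variable {AP : Type}

def subformulas : GML AP → List (GML AP)
  | .top => [.top]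
  | .prop p => [.prop p]
  | .neg ψ => .neg ψ :: ψ.subformulas
  | .and ψ χ => .and ψ χ :: (ψ.subformulas ++ χ.subformulas)
  | .dia T j ψs => .dia T j ψs :: (List.finRange T.n).flatMap fun i => (ψs i).subformulas

theorem mem_subformulas_self (φ : GML AP) : φ ∈ φ.subformulas := by
  cases φ <;> simp [subformulas]

theorem subformulas_subset {φ ψ : GML AP} (h : ψ ∈ φ.subformulas) :
    ψ.subformulas ⊆ φ.subformulas := by
  induction φ with
  | top | prop => simp_all [subformulas]
  | neg χ ih =>
      rcases List.mem_cons.1 h with rfl | h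
      · exact List.Subset.refl _
      · exact List.Subset.trans (ih h) (List.subset_cons_self _ _)
  | and χ₁ χ₂ ih₁ ih₂ =>
      rcases List.mem_cons.1 h with rfl | h
      · exact List.Subset.refl _
      rcases List.mem_append.1 h with h | h
      · exact List.Subset.trans (ih₁ h)
          (List.Subset.trans (List.subset_append_left _ _) (List.subset_cons_self _ _))
      · exact List.Subset.trans (ih₂ h)
          (List.Subset.trans (List.subset_append_right _ _) (List.subset_cons_self _ _))
  | dia T j ψs ih =>
      rcases List.mem_cons.1 h with rfl | h
      · exact List.Subset.refl _
      obtain ⟨i, -, h⟩ := List.mem_flatMap.1 h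
      exact fun x hx =>
        List.mem_cons_of_mem _ (List.mem_flatMap.2 ⟨i, List.mem_finRange i, ih i h hx⟩)

theorem Wf.of_mem_subformulas {𝒯 : Finset Template} {φ ψ : GML AP} (hφ : φ.Wf 𝒯)
    (h : ψ ∈ φ.subformulas) : ψ.Wf 𝒯 := by
  induction φ with
  | top | prop => simp_all [subformulas]
  | neg χ ih =>
      rcases List.mem_cons.1 h with rfl | h
      exacts [hφ, ih hφ h]
  | and χ₁ χ₂ ih₁ ih₂ =>
      rcases List.mem_cons.1 h with rfl | h
      · exact hφ
      rcases List.mem_append.1 h with h | h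
      exacts [ih₁ hφ.1 h, ih₂ hφ.2 h]
  | dia T j ψs ih =>
      rcases List.mem_cons.1 h with rfl | h
      · exact hφ
      obtain ⟨i, -, h⟩ := List.mem_flatMap.1 h
      exact ih i (hφ.2.2 i) h

structure Modality (AP : Type) where
  T : Template
  grade : ℕ
  args : Fin T.n → GML AP

def Modality.toGML (m : Modality AP) : GML AP := .dia m.T m.grade m.args

def modality? : GML AP → Option (Modality AP)
  | .dia T j ψs => some ⟨T, j, ψs⟩
  | _ => none

def modalities (φ : GML AP) : List (Modality AP) := φ.subformulas.filterMap modality?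

theorem mem_modalities {φ : GML AP} {m : Modality AP} :
    m ∈ φ.modalities ↔ m.toGML ∈ φ.subformulas := by
  refine List.mem_filterMap.trans ⟨?_, fun h => ⟨_, h, rfl⟩⟩
  rintro ⟨ψ, hψ, hm⟩
  cases ψ <;> simp only [modality?, reduceCtorEq, Option.some.injEq] at hm
  rwa [← hm]

theorem template_mem_of_mem_modalities {𝒯 : Finset Template} {φ : GML AP} (hφ : φ.Wf 𝒯)
    {m : Modality AP} (hm : m ∈ φ.modalities) : m.T ∈ 𝒯 :=
  (hφ.of_mem_subformulas (mem_modalities.1 hm)).1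

theorem arg_mem_subformulas (T : Template) (j : ℕ) (ψs : Fin T.n → GML AP) (i : Fin T.n) :
    ψs i ∈ (dia T j ψs).subformulas :=
  List.mem_cons_of_mem _ (List.mem_flatMap.2 ⟨i, List.mem_finRange i, mem_subformulas_self _⟩)

theorem sd_arg_lt (T : Template) (j : ℕ) (ψs : Fin T.n → GML AP) (i : Fin T.n) :
    (ψs i).sd < (dia T j ψs).sd :=
  Nat.lt_one_add_iff.2 (Finset.le_sup (f := fun i => (ψs i).sd) (Finset.mem_univ i))

section Construction

variable {a : ℕ} (φ : GML (Fin a))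

abbrev width : ℕ := a + φ.subformulas.length

/-- Coordinates `a + k` of a feature vector carry the truth value of the `k`-th subformula;
the first `a` coordinates keep the propositions. -/
noncomputable def slot {ψ : GML (Fin a)} (h : ψ ∈ φ.subformulas) : Fin φ.width :=
  Fin.natAdd a ⟨φ.subformulas.idxOf ψ, List.idxOf_lt_length_of_mem h⟩

noncomputable def truth (ψ : GML (Fin a)) (x : Fin φ.width → ℝ) : ℝ :=
  match ψ with
  | .top => 1
  | .prop p => x (Fin.castAdd _ p)
  | ψ => if h : ψ ∈ φ.subformulas then x (φ.slot h) else 0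

theorem truth_eq_slot {ψ : GML (Fin a)} (h : ψ ∈ φ.subformulas) (hψ : ψ.sd ≠ 0)
    (x : Fin φ.width → ℝ) : φ.truth ψ x = x (φ.slot h) := by
  cases ψ with
  | top | prop => simp [sd] at hψ
  | _ => exact dif_pos h

noncomputable def update (ψ : GML (Fin a)) (x : Fin φ.width → ℝ)
    (z : Fin φ.modalities.length → ℝ) : ℝ :=
  match ψ with
  | .neg χ => 1 - φ.truth χ x
  | .and χ₁ χ₂ => φ.truth χ₁ x * φ.truth χ₂ x
  | .dia T j ψs =>
      if h : (⟨T, j, ψs⟩ : Modality (Fin a)) ∈ φ.modalities then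
        z ⟨_, List.idxOf_lt_length_of_mem h⟩
      else 0
  | _ => 0

noncomputable def capBound : ℕ :=
  1 + (φ.modalities.map fun m => m.grade * m.T.rootAuts.card).sum

theorem one_le_capBound : 1 ≤ φ.capBound := Nat.le_add_right 1 _

theorem grade_mul_le_capBound {m : Modality (Fin a)} (hm : m ∈ φ.modalities) :
    m.grade * m.T.rootAuts.card ≤ φ.capBound :=
  (List.le_sum_of_mem (List.mem_map_of_mem (f := fun m => m.grade * m.T.rootAuts.card) hm)).trans
    (Nat.le_add_left _ _)

noncomputable def toTGNN {𝒯 : Finset Template} (hφ : φ.Wf 𝒯) :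
    TGNN 𝒯 φ.width φ.modalities.length φ.sd where
  temp _ j := φ.modalities[j].T
  temp_mem _ j := template_mem_of_mem_modalities hφ (List.getElem_mem _)
  aggT _ j lab _ :=
    φ.modalities[j].T.twistedCount (fun i x => φ.truth (φ.modalities[j].args i) x = 1) lab
  aggT_inv _ _ _ _ _ h0 hpos hneg hlab := by
    funext
    exact congrArg _ (Template.twistedCount_eq_of_rootAut _ ⟨h0, hpos, hneg⟩ hlab)
  agg _ j M k :=
    if φ.modalities[j].grade * φ.modalities[j].T.rootAuts.card
        ≤ ((mcap φ.capBound M).map fun x => ⌊x k⌋₊).sum then 1 else 0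
  comb _ x y k :=
    if hk : k.val < a then x k
    else
      φ.update (φ.subformulas[k.val - a]'(by have : k.val < a + _ := k.isLt; omega)) x
        fun j => y j k
  cls x := decide (φ.truth φ x = 1)

theorem isCBounded_toTGNN {𝒯 : Finset Template} (hφ : φ.Wf 𝒯) :
    (φ.toTGNN hφ).IsCBounded φ.capBound := by
  intro l j M
  funext k
  simp only [toTGNN, mcap_mcap]

end Construction

section Correctness

variable {a : ℕ} {𝒯 : Finset Template} (φ : GML (Fin a)) (hφ : φ.Wf 𝒯)

theorem toTGNN_comb_castAdd (l : Fin φ.sd) (x : Fin φ.width → ℝ)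
    (y : Fin φ.modalities.length → Fin φ.width → ℝ) (p : Fin a) :
    (φ.toTGNN hφ).comb l x y (Fin.castAdd _ p) = x (Fin.castAdd _ p) :=
  dif_pos p.isLt

theorem toTGNN_comb_slot (l : Fin φ.sd) (x : Fin φ.width → ℝ)
    (y : Fin φ.modalities.length → Fin φ.width → ℝ) {ψ : GML (Fin a)}
    (h : ψ ∈ φ.subformulas) :
    (φ.toTGNN hφ).comb l x y (φ.slot h) = φ.update ψ x fun j => y j (φ.slot h) := by
  have hslot : ¬ (φ.slot h).val < a := by simp [slot]
  simp only [toTGNN, dif_neg hslot]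
  congr
  simp [slot, List.getElem_idxOf]

variable (G : LGraph (Fin a → Bool))

theorem toTGNN_feat_castAdd (v : ℕ) (p : Fin a) : ∀ l ≤ φ.sd,
    (φ.toTGNN hφ).feat (initG φ.width G) l v (Fin.castAdd _ p) = boolToReal (G.lab v p)
  | 0, _ => dif_pos p.isLt
  | l + 1, hl => by
      rw [TGNN.feat_succ _ _ hl, toTGNN_comb_castAdd]
      exact toTGNN_feat_castAdd v p l (Nat.le_of_succ_le hl)

theorem toTGNN_agg_eq {l : ℕ} (hl : l < φ.sd) (v : ℕ) (j : Fin φ.modalities.length)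
    {m : Modality (Fin a)} (hj : φ.modalities[j] = m)
    (hargs : ∀ i w, φ.truth (m.args i) ((φ.toTGNN hφ).feat (initG φ.width G) l w)
      = if Sat G (m.args i) w then 1 else 0) (k : Fin φ.width) :
    (φ.toTGNN hφ).agg ⟨l, hl⟩ j
        ((embFinset ((φ.toTGNN hφ).temp ⟨l, hl⟩ j) (initG φ.width G) v).val.map
          fun f => (φ.toTGNN hφ).aggT ⟨l, hl⟩ j
            fun u => (φ.toTGNN hφ).feat (initG φ.width G) l (f u)) k
      = if Sat G m.toGML v then 1 else 0 := by
  subst hj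
  set m := φ.modalities[j]
  have hm : m ∈ φ.modalities := List.getElem_mem _
  have hcount : ∀ f : Fin (m.T.n + 1) → ℕ,
      ⌊(φ.toTGNN hφ).aggT ⟨l, hl⟩ j
          (fun u => (φ.toTGNN hφ).feat (initG φ.width G) l (f u)) k⌋₊
        = m.T.twistedCount (fun i w => Sat G (m.args i) w) f := by
    intro f
    refine (Nat.floor_natCast _).trans
      (congrArg Finset.card (Finset.filter_congr fun σ _ => forall_congr' fun i => ?_))
    change φ.truth (m.args i) ((φ.toTGNN hφ).feat (initG φ.width G) l (f (σ i.succ))) = 1 ↔ _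
    rw [hargs]
    split_ifs <;> simp_all
  set M := (embFinset m.T G v).val.map fun f => (φ.toTGNN hφ).aggT ⟨l, hl⟩ j
    fun u => (φ.toTGNN hφ).feat (initG φ.width G) l (f u)
  have hsum : (M.map fun x => ⌊x k⌋₊).sum
      = m.T.rootAuts.card * ((embFinset m.T G v).filter
          fun f => ∀ i, Sat G (m.args i) (f i.succ)).card := by
    rw [Multiset.map_map, ← Template.sum_twistedCount_embFinset]
    exact congrArg Multiset.sum (Multiset.map_congr rfl fun f _ => hcount f)
  have hthreshold :
      m.grade * m.T.rootAuts.card ≤ ((mcap φ.capBound M).map fun x => ⌊x k⌋₊).sum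
      ↔ Sat G m.toGML v := by
    rw [le_sum_map_mcap_iff _ φ.one_le_capBound (φ.grade_mul_le_capBound hm), hsum, mul_comm,
      Nat.mul_le_mul_left_iff m.T.card_rootAuts_pos]
    rfl
  exact if_congr hthreshold rfl rfl

theorem truth_toTGNN_feat_of_sd_eq_zero {l : ℕ} (hl : l ≤ φ.sd) {ψ : GML (Fin a)}
    (hψ : ψ.sd = 0) (v : ℕ) :
    φ.truth ψ ((φ.toTGNN hφ).feat (initG φ.width G) l v) = if Sat G ψ v then 1 else 0 := by
  cases ψ with
  | top => simp [truth, Sat]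
  | prop p =>
    change (φ.toTGNN hφ).feat (initG φ.width G) l v (Fin.castAdd _ p) = _
    rw [toTGNN_feat_castAdd φ hφ G v p l hl]
    exact if_congr Iff.rfl rfl rfl
  | _ => simp [sd] at hψ

theorem truth_toTGNN_feat : ∀ l ≤ φ.sd, ∀ ψ ∈ φ.subformulas, ψ.sd ≤ l → ∀ v,
    φ.truth ψ ((φ.toTGNN hφ).feat (initG φ.width G) l v) = if Sat G ψ v then 1 else 0 := by
  intro l
  induction l with
  | zero =>
    exact fun hl ψ _ hsd => truth_toTGNN_feat_of_sd_eq_zero φ hφ G hl (Nat.le_zero.1 hsd)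
  | succ l ih =>
    intro hl ψ hmem hsd v
    obtain hψ | hψ := eq_or_ne ψ.sd 0
    · exact truth_toTGNN_feat_of_sd_eq_zero φ hφ G hl hψ v
    have IH := ih (Nat.le_of_succ_le hl)
    have hsub : ψ.subformulas ⊆ φ.subformulas := subformulas_subset hmem
    rw [truth_eq_slot φ hmem hψ, TGNN.feat_succ _ _ hl, toTGNN_comb_slot]
    cases ψ with
    | top | prop => simp [sd] at hψ
    | neg χ =>
      have hχ : χ ∈ φ.subformulas := hsub (by simp [subformulas, mem_subformulas_self])
      have hsdχ : χ.sd ≤ l := by simp only [sd] at hsd; omega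
      simp only [update, IH χ hχ hsdχ v, Sat]
      by_cases h : Sat G χ v <;> simp [h]
    | and χ₁ χ₂ =>
      have hχ₁ : χ₁ ∈ φ.subformulas := hsub (by simp [subformulas, mem_subformulas_self])
      have hχ₂ : χ₂ ∈ φ.subformulas := hsub (by simp [subformulas, mem_subformulas_self])
      have hsdχ : χ₁.sd ≤ l ∧ χ₂.sd ≤ l := by simp only [sd] at hsd; omega
      simp only [update, IH χ₁ hχ₁ hsdχ.1 v, IH χ₂ hχ₂ hsdχ.2 v, Sat]
      split_ifs <;> simp_all
    | dia T j ψs =>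
      have hm : (⟨T, j, ψs⟩ : Modality (Fin a)) ∈ φ.modalities := mem_modalities.2 hmem
      rw [update, dif_pos hm]
      exact toTGNN_agg_eq φ hφ G hl v _ (m := ⟨T, j, ψs⟩) (List.getElem_idxOf _)
        (fun i w => IH _ (hsub (arg_mem_subformulas T j ψs i))
          (Nat.lt_succ_iff.1 ((sd_arg_lt T j ψs i).trans_le hsd)) w) _

end Correctness

end GML

/-- For every `GML(𝒯)` formula `φ` there is a bounded `𝒯`-GNN `𝒩` with
`sd(φ)` layers capturing `φ`: for every finite labelled graph `G` over the fixed finite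
proposition set and every node `v`, `𝒩(G,v) = 1` iff `(G,v) ⊨ φ`. -/
theorem logic_to_gnn {a : ℕ} (𝒯 : Finset Template) (φ : GML (Fin a)) (hφ : φ.Wf 𝒯) :
    ∃ (d nAr : ℕ) (N : TGNN 𝒯 d nAr φ.sd) (c : ℕ), 1 ≤ c ∧ N.IsCBounded c ∧
      ∀ (G : LGraph (Fin a → Bool)) (v : ℕ), v ∈ G.verts →
        (N.cls (N.feat (initG d G) φ.sd v) = true ↔ Sat G φ v) := by
  refine ⟨φ.width, φ.modalities.length, φ.toTGNN hφ, φ.capBound, φ.one_le_capBound,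
    φ.isCBounded_toTGNN hφ, fun G v _ => ?_⟩
  have hφv := φ.truth_toTGNN_feat hφ G φ.sd le_rfl φ φ.mem_subformulas_self le_rfl v
  change decide (φ.truth φ _ = 1) = true ↔ _
  rw [hφv]
  by_cases hS : Sat G φ v <;> simp [hS]
end
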